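/- arXiv:1912.01164 — 8 statements merged into one kernel-verified Lean document; each statement's English description precedes it below -/
import Mathlib

section
/- Let U be a linear coloring of K_m with colors 1,...,q, with length-color sets L_s = {l : c(l) = s}, and let V be a linear coloring of K_n with colors q+1,...,q+r. Suppose L_q is a difference-free set (no element of L_q is the difference of two elements of L_q). Define a linear coloring W on lengths {1,...,(n-1)(m-1)} by: a length l = h + (μ-1)(m-1) with 1 ≤ h ≤ m-1, 1 ≤ μ ≤ n-1, gets color c_U(h) if h ∉ L_q, and gets color c_V(μ) if h ∈ L_q. Then for each color t of V: if W contains a monochromatic triangle in color t, then V contains a monochromatic triangle in color t. -/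
/-- Generalised construction, V-colours, hard direction: if the compound
colouring `W` (length `l = h + (μ-1)(m-1)`, `1 ≤ h ≤ m-1`, coloured `cU h` if
`h` is not in the template `L_q = {h : cU h = q}` and `cV μ` otherwise, where
`L_q` is difference-free) contains a monochromatic triangle in a colour `t` of
`V`, then `V` contains a monochromatic triangle in colour `t`. -/
theorem compound_triangle_to_V_triangle (m n q r t : ℕ) (cU cV cW : ℕ → ℕ)
    (hm : 2 ≤ m)
    (hUcol : ∀ h, 1 ≤ h → h ≤ m - 1 → 1 ≤ cU h ∧ cU h ≤ q)
    (hVcol : ∀ μ, 1 ≤ μ → μ ≤ n - 1 → q + 1 ≤ cV μ ∧ cV μ ≤ q + r)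
    (hdf : ∀ a b, 1 ≤ a → a < b → b ≤ m - 1 → cU a = q → cU b = q →
      cU (b - a) ≠ q)
    (hW : ∀ l, 1 ≤ l → l ≤ (n - 1) * (m - 1) →
      cW l = if cU ((l - 1) % (m - 1) + 1) = q then cV ((l - 1) / (m - 1) + 1)
             else cU ((l - 1) % (m - 1) + 1))
    (ht : q + 1 ≤ t) (ht' : t ≤ q + r)
    (htri : ∃ x y, 1 ≤ x ∧ x < y ∧ y ≤ (n - 1) * (m - 1) ∧
      cW x = t ∧ cW y = t ∧ cW (y - x) = t) :
    ∃ μ ν, 1 ≤ μ ∧ μ < ν ∧ ν ≤ n - 1 ∧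
      cV μ = t ∧ cV ν = t ∧ cV (ν - μ) = t := by
  obtain ⟨x, y, hx1, hxy, hyn, hWx, hWy, hWd⟩ := htri
  have hM : 0 < m - 1 := by omega
  have key : ∀ l, 1 ≤ l → l ≤ (n - 1) * (m - 1) → cW l = t →
      cU ((l - 1) % (m - 1) + 1) = q ∧ cV ((l - 1) / (m - 1) + 1) = t := by
    intro l hl1 hl2 hlt
    rw [hW l hl1 hl2] at hlt
    by_cases hq : cU ((l - 1) % (m - 1) + 1) = q
    · rw [if_pos hq] at hlt
      exact ⟨hq, hlt⟩
    · rw [if_neg hq] at hlt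
      have hb : (l - 1) % (m - 1) + 1 ≤ m - 1 := by
        have := Nat.mod_lt (l - 1) hM; omega
      have := hUcol ((l - 1) % (m - 1) + 1) (by omega) hb
      omega
  have hd1 : 1 ≤ y - x := by omega
  have hd2 : y - x ≤ (n - 1) * (m - 1) := by omega
  obtain ⟨hqx, hvx⟩ := key x hx1 (by omega) hWx
  obtain ⟨hqy, hvy⟩ := key y (by omega) hyn hWy
  obtain ⟨hqd, hvd⟩ := key (y - x) hd1 hd2 hWd
  set M := m - 1 with hMdef
  set px := (x - 1) % M with hpxdef
  set qx := (x - 1) / M with hqxdef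
  set pd := (y - x - 1) % M with hpddef
  set qd := (y - x - 1) / M with hqddef
  have hpx : px < M := Nat.mod_lt _ hM
  have hpd : pd < M := Nat.mod_lt _ hM
  have hx' : x - 1 = px + qx * M := (Nat.mod_add_div' _ _).symm
  have hdd' : y - x - 1 = pd + qd * M := (Nat.mod_add_div' _ _).symm
  clear_value px qx pd qd
  by_cases hcase : px + pd + 1 < M
  · -- no wrap-around: contradiction with difference-freeness
    exfalso
    have hy' : y - 1 = (px + pd + 1) + (qx + qd) * M := by
      have hmul : (qx + qd) * M = qx * M + qd * M := Nat.add_mul _ _ _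
      omega
    have hym : (y - 1) % M = px + pd + 1 := by
      rw [hy', Nat.add_mul_mod_self_right, Nat.mod_eq_of_lt hcase]
    rw [hym] at hqy
    have hsub : (px + pd + 1 + 1) - (px + 1) = pd + 1 := by omega
    exact hdf (px + 1) (px + pd + 1 + 1) (by omega) (by omega) (by omega)
      hqx hqy (by rw [hsub]; exact hqd)
  · -- wrap-around: μ_y = μ_x + μ_d, giving a V-triangle
    have hy' : y - 1 = (px + pd + 1 - M) + (qx + qd + 1) * M := by
      have hmul : (qx + qd + 1) * M = qx * M + qd * M + M := by ring
      omega
    have hydiv : (y - 1) / M = qx + qd + 1 := by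
      rw [hy', Nat.add_mul_div_right _ _ hM, Nat.div_eq_of_lt (by omega)]
      omega
    rw [hydiv] at hvy
    have hlt : (qx + qd + 1) * M < (n - 1) * M := by omega
    have hnu : qx + qd + 1 < n - 1 := Nat.lt_of_mul_lt_mul_right hlt
    refine ⟨qx + 1, qx + qd + 1 + 1, by omega, by omega, by omega, hvx, hvy, ?_⟩
    have hsub : (qx + qd + 1 + 1) - (qx + 1) = qd + 1 := by omega
    rw [hsub]; exact hvd
end

section
/- With the compound coloring W constructed from U and V as in the generalised construction (W colors length h + (μ-1)(m-1) by c_U(h) if h ∉ L_q and by c_V(μ) if h ∈ L_q, where L_q is difference-free and contains m-1): if V contains a monochromatic copy of K_k in color t ∈ {q+1,...,q+r}, then W contains a monochromatic copy of K_k in color t. In particular, the set of lengths {μ(m-1) : μ a length of a monochromatic clique configuration in V} witnesses this. -/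
lemma aux_mod_div (m μ : ℕ) (hm : 2 ≤ m) (hμ : 1 ≤ μ) :
    (μ * (m - 1) - 1) % (m - 1) + 1 = m - 1 ∧
    (μ * (m - 1) - 1) / (m - 1) + 1 = μ := by
  have hd : 1 ≤ m - 1 := by omega
  have hrep : μ * (m - 1) - 1 = (m - 2) + (μ - 1) * (m - 1) := by
    obtain ⟨c, rfl⟩ : ∃ c, μ = c + 1 := ⟨μ - 1, by omega⟩
    have h1 : (c + 1) * (m - 1) = c * (m - 1) + (m - 1) := by ring
    simp only [Nat.add_sub_cancel]
    omega
  rw [hrep, Nat.add_mul_mod_self_right, Nat.add_mul_div_right _ _ hd,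
    Nat.mod_eq_of_lt (by omega), Nat.div_eq_of_lt (by omega)]
  omega

/-- Generalised construction, V-colours, easy direction: a monochromatic `K_k`
in a colour `t` of `V` (witnessed by a difference-closed set `S` of lengths of
colour `t`) yields a monochromatic `K_k` in colour `t` of the compound
colouring `W`, witnessed by the set of lengths `{μ(m-1) : μ ∈ S}`; here the
template `L_q = {h : cU h = q}` contains `m - 1`. -/
theorem V_clique_to_compound_clique (m n q r t k : ℕ) (cU cV cW : ℕ → ℕ)
    (hm : 2 ≤ m) (hk : 1 ≤ k)
    (htmpl : cU (m - 1) = q)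
    (hVcol : ∀ μ, 1 ≤ μ → μ ≤ n - 1 → q + 1 ≤ cV μ ∧ cV μ ≤ q + r)
    (hW : ∀ l, 1 ≤ l → l ≤ (n - 1) * (m - 1) →
      cW l = if cU ((l - 1) % (m - 1) + 1) = q then cV ((l - 1) / (m - 1) + 1)
             else cU ((l - 1) % (m - 1) + 1))
    (S : Finset ℕ) (hS : S ⊆ Finset.Icc 1 (n - 1)) (hcard : S.card = k - 1)
    (hcol : ∀ μ ∈ S, cV μ = t)
    (hdiff : ∀ μ ∈ S, ∀ ν ∈ S, μ < ν → cV (ν - μ) = t) :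
    (S.image (fun μ => μ * (m - 1))) ⊆ Finset.Icc 1 ((n - 1) * (m - 1)) ∧
    (S.image (fun μ => μ * (m - 1))).card = k - 1 ∧
    (∀ l ∈ S.image (fun μ => μ * (m - 1)), cW l = t) ∧
    (∀ a ∈ S.image (fun μ => μ * (m - 1)),
      ∀ b ∈ S.image (fun μ => μ * (m - 1)), a < b → cW (b - a) = t) := by
  have hbounds : ∀ μ ∈ S, 1 ≤ μ ∧ μ ≤ n - 1 := by
    intro μ hμ
    have := hS hμ
    simpa [Finset.mem_Icc] using this
  have key : ∀ μ, 1 ≤ μ → μ ≤ n - 1 → cW (μ * (m - 1)) = cV μ := by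
    intro μ h1 h2
    have hb1 : 1 ≤ μ * (m - 1) :=
      Nat.one_le_iff_ne_zero.mpr (Nat.mul_ne_zero (by omega) (by omega))
    have hb2 : μ * (m - 1) ≤ (n - 1) * (m - 1) := Nat.mul_le_mul_right _ h2
    obtain ⟨hmod, hdiv⟩ := aux_mod_div m μ hm h1
    rw [hW _ hb1 hb2, hmod, hdiv, htmpl, if_pos rfl]
  refine ⟨?_, ?_, ?_, ?_⟩
  · intro l hl
    simp only [Finset.mem_image] at hl
    obtain ⟨μ, hμS, rfl⟩ := hl
    obtain ⟨h1, h2⟩ := hbounds μ hμS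
    simp only [Finset.mem_Icc]
    exact ⟨Nat.one_le_iff_ne_zero.mpr (Nat.mul_ne_zero (by omega) (by omega)),
      Nat.mul_le_mul_right _ h2⟩
  · rw [Finset.card_image_of_injective _ (fun a b hab => by
      have : m - 1 ≠ 0 := by omega
      exact Nat.eq_of_mul_eq_mul_right (by omega) hab)]
    exact hcard
  · intro l hl
    simp only [Finset.mem_image] at hl
    obtain ⟨μ, hμS, rfl⟩ := hl
    obtain ⟨h1, h2⟩ := hbounds μ hμS
    rw [key μ h1 h2]
    exact hcol μ hμS
  · intro a ha b hb hab
    simp only [Finset.mem_image] at ha hb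
    obtain ⟨μ, hμS, rfl⟩ := ha
    obtain ⟨ν, hνS, rfl⟩ := hb
    obtain ⟨h1, h2⟩ := hbounds μ hμS
    obtain ⟨h1', h2'⟩ := hbounds ν hνS
    have hlt : μ < ν := by
      by_contra h
      push_neg at h
      exact absurd (Nat.mul_le_mul_right (m - 1) h) (by omega)
    have hsub : ν * (m - 1) - μ * (m - 1) = (ν - μ) * (m - 1) := by
      rw [Nat.sub_mul]
    rw [hsub, key (ν - μ) (by omega) (by omega)]
    exact hdiff μ hμS ν hνS hlt
end

section
/- Let W be a linear coloring of lengths {1,...,N} which is repeating with period p in color s, meaning: if c(l) = s and l + p ≤ N then c(l+p) = s, and moreover no multiple of p has color s. Suppose S = {h₁ < h₂ < ... < h_{k-1}} is a set of lengths all colored s with all pairwise differences colored s (so S witnesses a monochromatic K_k in color s). Then there exists another such witness set S' = {h'₁ < ... < h'_{k-1}}, all colored s with all pairwise differences colored s, satisfying h'₁ ≤ p - 1 and h'_{i+1} - h'_i ≤ p - 1 for all i; in particular h'_{k-1} ≤ (k-1)(p-1). -/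
/-- Shifting lemma: if the linear colouring `c` of lengths `{1,…,N}` is
repeating with period `p` in colour `s` (upward and downward shifts by `p`
preserve colour `s`, and no multiple of `p` has colour `s`), then any witness
set `g` for a monochromatic `K_k` in colour `s` (a strictly increasing list of
`k-1` lengths of colour `s` with all pairwise differences of colour `s`) can be
replaced by a witness `f` with `f 0 ≤ p - 1`, consecutive gaps at most `p - 1`,
and hence largest element at most `(k-1)(p-1)`. -/
theorem repeating_witness_shift (N p s k : ℕ) (c : ℕ → ℕ)
    (hp : 1 ≤ p) (hk : 2 ≤ k)
    (hup : ∀ l, c l = s → l + p ≤ N → c (l + p) = s)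
    (hdown : ∀ l, c l = s → p < l → c (l - p) = s)
    (hmult : ∀ j, 1 ≤ j → j * p ≤ N → c (j * p) ≠ s)
    (g : ℕ → ℕ)
    (hgmono : ∀ i j, i < j → j < k - 1 → g i < g j)
    (hgmem : ∀ i, i < k - 1 → 1 ≤ g i ∧ g i ≤ N ∧ c (g i) = s)
    (hgdiff : ∀ i j, i < j → j < k - 1 → c (g j - g i) = s) :
    ∃ f : ℕ → ℕ,
      (∀ i j, i < j → j < k - 1 → f i < f j) ∧
      (∀ i, i < k - 1 → 1 ≤ f i ∧ f i ≤ N ∧ c (f i) = s) ∧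
      (∀ i j, i < j → j < k - 1 → c (f j - f i) = s) ∧
      f 0 ≤ p - 1 ∧
      (∀ i, i + 1 < k - 1 → f (i + 1) - f i ≤ p - 1) ∧
      f (k - 2) ≤ (k - 1) * (p - 1) := by
  -- iterated downward shift
  have iter : ∀ t l', 1 ≤ l' → c (l' + t * p) = s → c l' = s := by
    intro t
    induction t with
    | zero => intro l' _ h; simpa using h
    | succ t ih =>
      intro l' h1 hc
      apply ih l' h1
      have e : l' + (t + 1) * p = (l' + t * p) + p := by ring
      rw [e] at hc
      have hlt : p < (l' + t * p) + p := by omega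
      have h2 := hdown _ hc hlt
      simpa using h2
  -- reduction lemma
  have reduce : ∀ m m', 1 ≤ m' → m' ≤ m → m % p = m' % p → c m = s → c m' = s := by
    intro m m' h1 h2 h3 hc
    have hd : p ∣ m - m' := (Nat.modEq_iff_dvd' h2).mp h3.symm
    obtain ⟨t, ht⟩ := hd
    have hm : m = m' + p * t := by omega
    rw [hm, mul_comm] at hc
    exact iter t m' h1 hc
  -- nonzero residues
  have resnz : ∀ m, 1 ≤ m → m ≤ N → c m = s → m % p ≠ 0 := by
    intro m h1 h2 hc h0
    obtain ⟨j, hj⟩ := Nat.dvd_of_mod_eq_zero h0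
    have hj1 : 1 ≤ j := by
      rcases Nat.eq_zero_or_pos j with h | h
      · rw [h, mul_zero] at hj; omega
      · exact h
    have hjm : j * p = m := by rw [hj, mul_comm]
    exact hmult j hj1 (by rw [hjm]; exact h2) (by rw [hjm]; exact hc)
  set f : ℕ → ℕ := fun i => g 0 % p + ∑ t ∈ Finset.range i, (g (t + 1) - g t) % p with hf
  have hk1 : 0 < k - 1 := by omega
  have hg0 := hgmem 0 hk1
  have hres0 : g 0 % p ≠ 0 := resnz _ hg0.1 hg0.2.1 hg0.2.2
  have hgapnz : ∀ t, t + 1 < k - 1 → (g (t + 1) - g t) % p ≠ 0 := by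
    intro t ht
    have h1 : g t < g (t + 1) := hgmono t (t + 1) (Nat.lt_succ_self t) ht
    have h2 := hgmem (t + 1) ht
    exact resnz _ (by omega) (by omega) (hgdiff t (t + 1) (Nat.lt_succ_self t) ht)
  -- telescoping for g
  have gtel : ∀ i, i < k - 1 → g i = g 0 + ∑ t ∈ Finset.range i, (g (t + 1) - g t) := by
    intro i
    induction i with
    | zero => simp
    | succ i ih =>
      intro hi
      have hi' : i < k - 1 := by omega
      have h1 : g i < g (i + 1) := hgmono i (i + 1) (Nat.lt_succ_self i) hi
      rw [Finset.sum_range_succ, ← add_assoc, ← ih hi']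
      omega
  -- congruence of f
  have fcong : ∀ i, f i ≡ g 0 + ∑ t ∈ Finset.range i, (g (t + 1) - g t) [MOD p] := by
    intro i
    induction i with
    | zero => simpa [hf] using (Nat.mod_modEq (g 0) p)
    | succ i ih =>
      have e1 : f (i + 1) = f i + (g (i + 1) - g i) % p := by
        simp [hf, Finset.sum_range_succ, add_assoc]
      rw [e1, Finset.sum_range_succ, ← add_assoc]
      exact ih.add (Nat.mod_modEq _ p)
  -- f is at most g
  have fle : ∀ i, i < k - 1 → f i ≤ g i := by
    intro i hi
    rw [gtel i hi, hf]
    exact Nat.add_le_add (Nat.mod_le _ _)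
      (Finset.sum_le_sum fun t _ => Nat.mod_le _ _)
  -- f is positive
  have fpos : ∀ i, 1 ≤ f i := by
    intro i
    have : 1 ≤ g 0 % p := Nat.one_le_iff_ne_zero.mpr hres0
    calc 1 ≤ g 0 % p := this
      _ ≤ f i := Nat.le_add_right _ _
  -- splitting of f
  have fsplit : ∀ i j, i ≤ j →
      f j = f i + ∑ t ∈ Finset.Ico i j, (g (t + 1) - g t) % p := by
    intro i j hij
    simp only [hf, Finset.range_eq_Ico, add_assoc]
    rw [Finset.sum_Ico_consecutive _ (Nat.zero_le i) hij]
  -- splitting of g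
  have gsplit : ∀ i j, i ≤ j → j < k - 1 →
      g j = g i + ∑ t ∈ Finset.Ico i j, (g (t + 1) - g t) := by
    intro i j hij hj
    rw [gtel j hj, gtel i (by omega)]
    simp only [Finset.range_eq_Ico]
    rw [add_assoc, Finset.sum_Ico_consecutive _ (Nat.zero_le i) hij]
  -- positivity of difference sums
  have sumpos : ∀ i j, i < j → j < k - 1 →
      1 ≤ ∑ t ∈ Finset.Ico i j, (g (t + 1) - g t) % p := by
    intro i j hij hj
    have hmem : i ∈ Finset.Ico i j := Finset.mem_Ico.mpr ⟨le_refl i, hij⟩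
    have h1 : 1 ≤ (g (i + 1) - g i) % p :=
      Nat.one_le_iff_ne_zero.mpr (hgapnz i (by omega))
    calc 1 ≤ (g (i + 1) - g i) % p := h1
      _ ≤ _ := Finset.single_le_sum (f := fun t => (g (t + 1) - g t) % p)
          (fun t _ => Nat.zero_le _) hmem
  -- monotonicity
  have fmono : ∀ i j, i < j → j < k - 1 → f i < f j := by
    intro i j hij hj
    rw [fsplit i j (le_of_lt hij)]
    have := sumpos i j hij hj
    omega
  refine ⟨f, fmono, ?_, ?_, ?_, ?_, ?_⟩
  · -- membership
    intro i hi
    refine ⟨fpos i, le_trans (fle i hi) (hgmem i hi).2.1, ?_⟩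
    refine reduce (g i) (f i) (fpos i) (fle i hi) ?_ (hgmem i hi).2.2
    have := fcong i
    rw [← gtel i hi] at this
    exact this.symm
  · -- differences
    intro i j hij hj
    have hfd : f j - f i = ∑ t ∈ Finset.Ico i j, (g (t + 1) - g t) % p := by
      rw [fsplit i j (le_of_lt hij)]; omega
    have hgd : g j - g i = ∑ t ∈ Finset.Ico i j, (g (t + 1) - g t) := by
      rw [gsplit i j (le_of_lt hij) hj]; omega
    refine reduce (g j - g i) (f j - f i) ?_ ?_ ?_ (hgdiff i j hij hj)
    · rw [hfd]; exact sumpos i j hij hj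
    · rw [hfd, hgd]; exact Finset.sum_le_sum fun t _ => Nat.mod_le _ _
    · rw [hfd, hgd]; exact (Finset.sum_nat_mod _ _ _)
  · -- f 0 bound
    have : f 0 = g 0 % p := by simp [hf]
    have h2 : g 0 % p < p := Nat.mod_lt _ (by omega)
    omega
  · -- gap bound
    intro i _
    have e1 : f (i + 1) = f i + (g (i + 1) - g i) % p := by
      simp [hf, Finset.sum_range_succ, add_assoc]
    have h2 : (g (i + 1) - g i) % p < p := Nat.mod_lt _ (by omega)
    omega
  · -- final bound
    have h1 : f (k - 2) ≤ (p - 1) + (k - 2) * (p - 1) := by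
      rw [hf]
      have h2 : g 0 % p ≤ p - 1 := by
        have := Nat.mod_lt (g 0) (show 0 < p by omega); omega
      have h3 : ∑ t ∈ Finset.range (k - 2), (g (t + 1) - g t) % p ≤ (k - 2) * (p - 1) := by
        calc ∑ t ∈ Finset.range (k - 2), (g (t + 1) - g t) % p
            ≤ ∑ _t ∈ Finset.range (k - 2), (p - 1) := by
              refine Finset.sum_le_sum fun t _ => ?_
              have := Nat.mod_lt (g (t + 1) - g t) (show 0 < p by omega); omega
          _ = (k - 2) * (p - 1) := by simp [Finset.sum_const, mul_comm]
      exact Nat.add_le_add h2 h3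
    have h4 : (k - 1) * (p - 1) = (p - 1) + (k - 2) * (p - 1) := by
      have : k - 1 = (k - 2) + 1 := by omega
      rw [this, Nat.succ_mul]; ring
    omega
end

section
/- Suppose there is a linear Ramsey coloring U of K_m with q colors containing no monochromatic K_{k_s} in color s for s < q and no monochromatic triangle in color q, such that length m-1 has color q (so L_q is a difference-free template). Suppose also there is a linear Ramsey coloring V of K_n with r colors containing no monochromatic K_{k_{q+t}} in color q+t. If additionally the compound coloring W restricted to lengths {1,...,Q(m-2)} (Q = max_s (k_s - 1) over s < q) contains no monochromatic witness set for K_{k_s} in any color s < q, then W is a linear coloring of K_{(m-1)(n-1)+1} containing no monochromatic K_{k_s} in color s for each s ∈ {1,...,q-1} and no monochromatic K_{k_{q+t}} in color q+t for each t ∈ {1,...,r}. Hence R(k_1,...,k_{q-1},k_{q+1},...,k_{q+r}) > (m-1)(n-1)+1. -/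
/-- The multicolour Ramsey number for a set `colors` of colours and target
clique sizes `tgt`: the least `N` such that every symmetric edge-colouring of
`K_N` with colours in `colors` has a monochromatic `K_{tgt s}` in some colour
`s ∈ colors`. -/
noncomputable def mramsey (colors : Finset ℕ) (tgt : ℕ → ℕ) : ℕ :=
  sInf {N | ∀ col : ℕ → ℕ → ℕ, (∀ i j, col i j = col j i) →
    (∀ i j, i < N → j < N → i ≠ j → col i j ∈ colors) →
    ∃ s ∈ colors, ∃ S : Finset ℕ, (∀ v ∈ S, v < N) ∧ S.card = tgt s ∧
      ∀ i ∈ S, ∀ j ∈ S, i ≠ j → col i j = s}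

lemma rep_mod (M k r' : ℕ) (hM : 0 < M) (hr : r' < M) :
    (M * k + r') % M = r' ∧ (M * k + r') / M = k := by
  constructor
  · simpa [Nat.mod_eq_of_lt hr] using Nat.mul_add_mod M k r'
  · rw [Nat.mul_add_div hM, Nat.div_eq_of_lt hr]; omega

lemma sub_rep (M a b : ℕ) (hM : 0 < M) (h1 : 1 ≤ a) (hab : a < b) :
    ((b-1)%M > (a-1)%M →
      ((b-a-1)%M + 1 = (b-1)%M - (a-1)%M ∧ (b-a-1)/M = (b-1)/M - (a-1)/M)) ∧
    ((b-1)%M = (a-1)%M →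
      ((b-a-1)%M = M - 1 ∧ (b-a-1)/M + 1 = (b-1)/M - (a-1)/M)) ∧
    ((b-1)%M < (a-1)%M →
      ((b-a-1)%M + 1 = M - ((a-1)%M - (b-1)%M) ∧ (b-a-1)/M + 1 = (b-1)/M - (a-1)/M)) := by
  set ra := (a-1) % M with hra
  set rb := (b-1) % M with hrb
  set qa := (a-1) / M with hqa
  set qb := (b-1) / M with hqb
  have Ha : M * qa + ra = a - 1 := Nat.div_add_mod (a-1) M
  have Hb : M * qb + rb = b - 1 := Nat.div_add_mod (b-1) M
  have hraM : ra < M := Nat.mod_lt _ hM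
  have hrbM : rb < M := Nat.mod_lt _ hM
  have hqle : qa ≤ qb := by
    by_contra hcon
    push_neg at hcon
    have h2 : M * (qb + 1) ≤ M * qa := Nat.mul_le_mul_left M hcon
    have h3 : M * (qb+1) = M * qb + M := by ring
    set u := M * qa; set v := M * qb
    omega
  have hsplit : M * qb = M * qa + M * (qb - qa) := by
    rw [← Nat.mul_add]
    congr 1
    omega
  have hklt : rb ≤ ra → qa < qb := by
    intro hle
    rcases Nat.lt_or_ge qa qb with h|h
    · exact h
    · have heqq : qb = qa := le_antisymm h hqle
      rw [heqq] at Hb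
      exfalso; set u := M * qa
      omega
  refine ⟨?_, ?_, ?_⟩
  · intro hgt
    have hx : b - a - 1 = M * (qb - qa) + (rb - ra - 1) := by
      set u := M * qa; set w := M * (qb - qa)
      omega
    have := rep_mod M (qb - qa) (rb - ra - 1) hM (by omega)
    rw [hx]
    exact ⟨by omega, by omega⟩
  · intro heq
    have hk := hklt (le_of_eq heq)
    set K := qb - qa - 1 with hK
    have h5 : qb - qa = K + 1 := by omega
    have hsplit2 : M * (qb - qa) = M * K + M := by rw [h5]; ring
    have hx : b - a - 1 = M * K + (M - 1) := by
      set u := M * qa; set w := M * (qb - qa); set w2 := M * K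
      omega
    have := rep_mod M K (M - 1) hM (by omega)
    rw [hx]
    exact ⟨by omega, by omega⟩
  · intro hlt
    have hk := hklt (le_of_lt hlt)
    set K := qb - qa - 1 with hK
    have h5 : qb - qa = K + 1 := by omega
    have hsplit2 : M * (qb - qa) = M * K + M := by rw [h5]; ring
    have hx : b - a - 1 = M * K + (M - (ra - rb) - 1) := by
      set u := M * qa; set w := M * (qb - qa); set w2 := M * K
      omega
    have := rep_mod M K (M - (ra - rb) - 1) hM (by omega)
    rw [hx]
    exact ⟨by omega, by omega⟩

theorem generalised_construction_parts (m n q r Q : ℕ) (cU cV cW : ℕ → ℕ)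
    (tgt : ℕ → ℕ)
    (hm : 2 ≤ m) (hn : 2 ≤ n) (hq : 2 ≤ q) (hr : 1 ≤ r)
    (hUcol : ∀ h, 1 ≤ h → h ≤ m - 1 → 1 ≤ cU h ∧ cU h ≤ q)
    (hVcol : ∀ μ, 1 ≤ μ → μ ≤ n - 1 → q + 1 ≤ cV μ ∧ cV μ ≤ q + r)
    (htmpl : cU (m - 1) = q)
    (hdf : ∀ a b, 1 ≤ a → a < b → b ≤ m - 1 → cU a = q → cU b = q →
      cU (b - a) ≠ q)
    (hQ : ∀ s, 1 ≤ s → s ≤ q - 1 → tgt s - 1 ≤ Q)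
    (hW : ∀ l, 1 ≤ l → l ≤ (n - 1) * (m - 1) →
      cW l = if cU ((l - 1) % (m - 1) + 1) = q then cV ((l - 1) / (m - 1) + 1)
             else cU ((l - 1) % (m - 1) + 1))
    (hWres : ∀ s, 1 ≤ s → s ≤ q - 1 →
      ¬ ∃ S : Finset ℕ, S ⊆ Finset.Icc 1 (Q * (m - 2)) ∧
        S.card = tgt s - 1 ∧ (∀ a ∈ S, cW a = s) ∧
        ∀ a ∈ S, ∀ b ∈ S, a < b → cW (b - a) = s)
    (hVfree : ∀ t, 1 ≤ t → t ≤ r →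
      ¬ ∃ S : Finset ℕ, S ⊆ Finset.Icc 1 (n - 1) ∧
        S.card = tgt (q + t) - 1 ∧ (∀ a ∈ S, cV a = q + t) ∧
        ∀ a ∈ S, ∀ b ∈ S, a < b → cV (b - a) = q + t) :
    (∀ s, 1 ≤ s → s ≤ q - 1 →
      ¬ ∃ S : Finset ℕ, S ⊆ Finset.Icc 1 ((n - 1) * (m - 1)) ∧
        S.card = tgt s - 1 ∧ (∀ a ∈ S, cW a = s) ∧
        ∀ a ∈ S, ∀ b ∈ S, a < b → cW (b - a) = s) ∧
    (∀ t, 1 ≤ t → t ≤ r →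
      ¬ ∃ S : Finset ℕ, S ⊆ Finset.Icc 1 ((n - 1) * (m - 1)) ∧
        S.card = tgt (q + t) - 1 ∧ (∀ a ∈ S, cW a = q + t) ∧
        ∀ a ∈ S, ∀ b ∈ S, a < b → cW (b - a) = q + t) := by
  have hM : 0 < m - 1 := by omega
  have hmodlt : ∀ l : ℕ, (l - 1) % (m - 1) < m - 1 := fun l => Nat.mod_lt _ hM
  -- decoding of colours < q
  have hcolS : ∀ l s, 1 ≤ l → l ≤ (n-1)*(m-1) → 1 ≤ s → s ≤ q - 1 → cW l = s →
      cU ((l-1) % (m-1) + 1) = s ∧ (l-1) % (m-1) + 1 ≤ m - 2 := by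
    intro l s hl1 hl2 hs1 hs2 hcl
    have hw := hW l hl1 hl2
    by_cases hcase : cU ((l-1) % (m-1) + 1) = q
    · rw [if_pos hcase] at hw
      have hdiv : (l-1)/(m-1) < n - 1 := by
        rw [Nat.div_lt_iff_lt_mul hM]; omega
      have := hVcol ((l-1)/(m-1) + 1) (Nat.le_add_left 1 _) hdiv
      exfalso
      omega
    · rw [if_neg hcase] at hw
      refine ⟨by omega, ?_⟩
      have hne : (l-1) % (m-1) + 1 ≠ m - 1 := by
        intro heq
        rw [heq] at hcase
        exact hcase htmpl
      have := hmodlt l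
      omega
  -- decoding of colours > q
  have hcolV : ∀ l t, 1 ≤ l → l ≤ (n-1)*(m-1) → 1 ≤ t → t ≤ r → cW l = q + t →
      cU ((l-1) % (m-1) + 1) = q ∧ cV ((l-1)/(m-1) + 1) = q + t ∧
        (l-1)/(m-1) + 1 ≤ n - 1 := by
    intro l t hl1 hl2 ht1 ht2 hcl
    have hw := hW l hl1 hl2
    have hdiv : (l-1)/(m-1) < n - 1 := by
      rw [Nat.div_lt_iff_lt_mul hM]; omega
    by_cases hcase : cU ((l-1) % (m-1) + 1) = q
    · rw [if_pos hcase] at hw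
      exact ⟨hcase, by omega, hdiv⟩
    · rw [if_neg hcase] at hw
      have := hUcol ((l-1) % (m-1) + 1) (Nat.le_add_left 1 _) (hmodlt l)
      exfalso
      omega
  constructor
  · -- Part 1
    intro s hs1 hs2 ⟨S, hSsub, hScard, hSc, hSd⟩
    apply hWres s hs1 hs2
    set K := tgt s - 1 with hK
    have hScard' : S.card = K := hScard
    set e := S.orderIsoOfFin hScard' with he
    set E : ℕ → ℕ := fun i => if h : i < K then (e ⟨i, h⟩ : ℕ) else 0 with hE
    have hEmem : ∀ i, i < K → E i ∈ S := by
      intro i hi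
      simp only [hE, dif_pos hi]
      exact (e ⟨i, hi⟩).2
    have hEbds : ∀ i, i < K → 1 ≤ E i ∧ E i ≤ (n-1)*(m-1) := by
      intro i hi
      have := hSsub (hEmem i hi)
      simpa [Finset.mem_Icc] using this
    have hEmono : ∀ i j, i < j → j < K → E i < E j := by
      intro i j hij hj
      have hi : i < K := hij.trans hj
      simp only [hE, dif_pos hi, dif_pos hj]
      exact e.strictMono (show (⟨i, hi⟩ : Fin K) < ⟨j, hj⟩ from hij)
    set hh : ℕ → ℕ := fun x => (x - 1) % (m-1) + 1 with hhh
    have hhmod : ∀ x, 1 ≤ x → hh x ≡ x [MOD (m-1)] := by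
      intro x hx
      have h1 := (Nat.mod_modEq (x-1) (m-1)).add_right 1
      simpa [hhh, Nat.sub_add_cancel hx] using h1
    have hhcong : ∀ x y, 1 ≤ x → 1 ≤ y → x ≡ y [MOD (m-1)] → hh x = hh y := by
      intro x y hx hy hxy
      have h1 : x - 1 + 1 ≡ y - 1 + 1 [MOD (m-1)] := by
        rw [Nat.sub_add_cancel hx, Nat.sub_add_cancel hy]; exact hxy
      have h2 : x - 1 ≡ y - 1 [MOD (m-1)] := Nat.ModEq.add_right_cancel' 1 h1
      have h3 : (x-1) % (m-1) = (y-1) % (m-1) := h2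
      simp only [hhh, h3]
    have hhle : ∀ x, 1 ≤ x → hh x ≤ x := by
      intro x hx
      have := Nat.mod_le (x-1) (m-1)
      simp only [hhh]; omega
    -- colour facts for elements and gaps
    have hEcol : ∀ i, i < K → cU (hh (E i)) = s ∧ hh (E i) ≤ m - 2 := by
      intro i hi
      exact hcolS (E i) s (hEbds i hi).1 (hEbds i hi).2 hs1 hs2 (hSc _ (hEmem i hi))
    have hDcol : ∀ i j, i < j → j < K → cU (hh (E j - E i)) = s ∧ hh (E j - E i) ≤ m - 2 := by
      intro i j hij hj
      have hi : i < K := hij.trans hj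
      have hlt := hEmono i j hij hj
      refine hcolS (E j - E i) s (by omega) (by have := (hEbds j hj).2; omega) hs1 hs2 ?_
      exact hSd _ (hEmem i hi) _ (hEmem j hj) hlt
    set F : ℕ → ℕ := fun i =>
      Nat.rec (motive := fun _ => ℕ) (hh (E 0)) (fun n acc => acc + hh (E (n+1) - E n)) i with hF
    have hF0 : F 0 = hh (E 0) := rfl
    have hFs : ∀ i, F (i+1) = F i + hh (E (i+1) - E i) := fun i => rfl
    -- basic bounds for F
    have hFfacts : ∀ i, i < K → 1 ≤ F i ∧ F i ≤ E i ∧ F i ≤ (i+1) * (m-2) ∧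
        F i ≡ E i [MOD (m-1)] := by
      intro i
      induction i with
      | zero =>
        intro h0
        have h1 := hEcol 0 h0
        have h2 := hEbds 0 h0
        refine ⟨by simp [hF0, hhh], ?_, ?_, ?_⟩
        · rw [hF0]; exact hhle _ h2.1
        · rw [hF0]; omega
        · rw [hF0]; exact hhmod _ h2.1
      | succ i ih =>
        intro hiK
        have hi : i < K := by omega
        obtain ⟨ih1, ih2, ih3, ih4⟩ := ih hi
        have hlt := hEmono i (i+1) (by omega) hiK
        have hd := hDcol i (i+1) (by omega) hiK
        have hd1 : 1 ≤ hh (E (i+1) - E i) := by simp [hhh]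
        have hdle : hh (E (i+1) - E i) ≤ E (i+1) - E i := hhle _ (by omega)
        have hmul : (i + 1 + 1) * (m - 2) = (i + 1) * (m - 2) + (m - 2) := by ring
        refine ⟨by rw [hFs]; omega, by rw [hFs]; omega,
          by rw [hFs]; have := hd.2; omega, ?_⟩
        · rw [hFs]
          have hmod := hhmod (E (i+1) - E i) (by omega)
          have := ih4.add hmod
          have heq : E i + (E (i+1) - E i) = E (i+1) := by omega
          rw [heq] at this
          exact this
    -- difference facts for F
    have hFdiff : ∀ j, j < K → ∀ i, i < j → 1 ≤ F j - F i ∧ F j - F i ≤ E j - E i ∧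
        F j - F i ≡ E j - E i [MOD (m-1)] := by
      intro j
      induction j with
      | zero => intro _ i hi; omega
      | succ j ih =>
        intro hjK i hij
        have hj : j < K := by omega
        have hlt := hEmono j (j+1) (by omega) hjK
        have hd1 : 1 ≤ hh (E (j+1) - E j) := by simp [hhh]
        have hdle : hh (E (j+1) - E j) ≤ E (j+1) - E j := hhle _ (by omega)
        have hmodd := hhmod (E (j+1) - E j) (by omega)
        rcases Nat.lt_or_ge i j with hij' | hij'
        · obtain ⟨d1, d2, d3⟩ := ih hj i hij'
          have hFj := (hFfacts j hj).2.1
          have hFi1 : F i ≤ F j := by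
            have := (hFfacts i (by omega)).1; omega
          have hEij := hEmono i j hij' hj
          refine ⟨by rw [hFs]; omega, by rw [hFs]; omega, ?_⟩
          have hsum := d3.add hmodd
          have he1 : E j - E i + (E (j+1) - E j) = E (j+1) - E i := by omega
          have he2 : F j - F i + hh (E (j+1) - E j) = F (j+1) - F i := by
            rw [hFs]; omega
          rw [he1, he2] at hsum
          exact hsum
        · have hij2 : i = j := by omega
          subst hij2
          have hFle := (hFfacts i hj).2.1
          refine ⟨by rw [hFs]; omega, by rw [hFs]; omega, ?_⟩
          have heq : F (i+1) - F i = hh (E (i+1) - E i) := by rw [hFs]; omega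
          rw [heq]
          exact hmodd
    have hKQ : K ≤ Q := hQ s hs1 hs2
    -- the translated witness set
    refine ⟨(Finset.range K).image F, ?_, ?_, ?_, ?_⟩
    · intro x hx
      obtain ⟨i, hi, rfl⟩ := Finset.mem_image.mp hx
      rw [Finset.mem_range] at hi
      obtain ⟨f1, f2, f3, f4⟩ := hFfacts i hi
      rw [Finset.mem_Icc]
      constructor
      · exact f1
      · calc F i ≤ (i+1) * (m-2) := f3
          _ ≤ Q * (m-2) := Nat.mul_le_mul_right _ (by omega)
    · rw [Finset.card_image_of_injOn, Finset.card_range]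
      intro x hx y hy hxy
      rw [Finset.mem_coe, Finset.mem_range] at hx hy
      by_contra hne
      rcases Nat.lt_or_ge x y with h|h
      · have := (hFdiff y hy x h).1; omega
      · have hyx : y < x := by omega
        have := (hFdiff x hx y hyx).1; omega
    · intro a ha
      obtain ⟨i, hi, rfl⟩ := Finset.mem_image.mp ha
      rw [Finset.mem_range] at hi
      obtain ⟨f1, f2, f3, f4⟩ := hFfacts i hi
      have hbd := hEbds i hi
      have hw := hW (F i) f1 (by omega)
      have hcong : hh (F i) = hh (E i) := hhcong _ _ f1 hbd.1 f4
      have hcU : cU (hh (F i)) = s := by rw [hcong]; exact (hEcol i hi).1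
      simp only [hhh] at hcU
      rw [if_neg (by omega)] at hw
      omega
    · intro a ha b hb hab
      obtain ⟨i, hi, rfl⟩ := Finset.mem_image.mp ha
      obtain ⟨j, hj, rfl⟩ := Finset.mem_image.mp hb
      rw [Finset.mem_range] at hi hj
      have hij : i < j := by
        rcases Nat.lt_or_ge i j with h|h
        · exact h
        · exfalso
          rcases Nat.eq_or_lt_of_le h with h'|h'
          · rw [h'] at hab; exact lt_irrefl _ hab
          · have := (hFdiff i hi j h').1; omega
      obtain ⟨d1, d2, d3⟩ := hFdiff j hj i hij
      have hEcolD := hDcol i j hij hj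
      have hElt := hEmono i j hij hj
      have hEbd := hEbds j hj
      have hEi1 := (hEbds i hi).1
      have hw := hW (F j - F i) d1 (by omega)
      have hcong : hh (F j - F i) = hh (E j - E i) := hhcong _ _ d1 (by omega) d3
      have hcU : cU (hh (F j - F i)) = s := by rw [hcong]; exact hEcolD.1
      simp only [hhh] at hcU
      rw [if_neg (by omega)] at hw
      omega
  · -- Part 2
    intro t ht1 ht2 ⟨S, hSsub, hScard, hSc, hSd⟩
    apply hVfree t ht1 ht2
    set g : ℕ → ℕ := fun l => (l - 1) / (m-1) + 1 with hg
    have hgdef : ∀ l, g l = (l - 1) / (m-1) + 1 := fun l => rfl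
    have hSbds : ∀ a ∈ S, 1 ≤ a ∧ a ≤ (n-1)*(m-1) := by
      intro a ha
      have := hSsub ha
      simpa [Finset.mem_Icc] using this
    have hkey : ∀ a ∈ S, ∀ b ∈ S, a < b → g b - g a = g (b - a) ∧ g a < g b := by
      intro a ha b hb hab
      have hba := hSbds a ha
      have hbb := hSbds b hb
      have hca := hcolV a t hba.1 hba.2 ht1 ht2 (hSc a ha)
      have hcb := hcolV b t hbb.1 hbb.2 ht1 ht2 (hSc b hb)
      have hcd := hcolV (b - a) t (by omega) (by omega) ht1 ht2 (hSd a ha b hb hab)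
      obtain ⟨c1, c2, c3⟩ := sub_rep (m-1) a b hM hba.1 hab
      rcases lt_trichotomy ((b-1)%(m-1)) ((a-1)%(m-1)) with hcmp | hcmp | hcmp
      · obtain ⟨e1, e2⟩ := c3 hcmp
        rw [hgdef, hgdef, hgdef]
        obtain ⟨DA, hDA⟩ : ∃ x, (a-1)/(m-1) = x := ⟨_, rfl⟩
        obtain ⟨DB, hDB⟩ : ∃ x, (b-1)/(m-1) = x := ⟨_, rfl⟩
        obtain ⟨DD, hDD⟩ : ∃ x, (b-a-1)/(m-1) = x := ⟨_, rfl⟩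
        rw [hDA, hDB, hDD] at e2 ⊢
        omega
      · obtain ⟨e1, e2⟩ := c2 hcmp
        rw [hgdef, hgdef, hgdef]
        obtain ⟨DA, hDA⟩ : ∃ x, (a-1)/(m-1) = x := ⟨_, rfl⟩
        obtain ⟨DB, hDB⟩ : ∃ x, (b-1)/(m-1) = x := ⟨_, rfl⟩
        obtain ⟨DD, hDD⟩ : ∃ x, (b-a-1)/(m-1) = x := ⟨_, rfl⟩
        rw [hDA, hDB, hDD] at e2 ⊢
        omega
      · -- impossible: contradicts difference-freeness
        exfalso
        obtain ⟨e1, e2⟩ := c1 hcmp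
        have hma := hmodlt a
        have hmb := hmodlt b
        have hdf' := hdf ((a-1)%(m-1) + 1) ((b-1)%(m-1) + 1) (by omega) (by omega)
          (by omega) hca.1 hcb.1
        apply hdf'
        have heq : (b-1)%(m-1) + 1 - ((a-1)%(m-1) + 1) = (b-a-1)%(m-1) + 1 := by omega
        rw [heq]
        exact hcd.1
    refine ⟨S.image g, ?_, ?_, ?_, ?_⟩
    · intro x hx
      obtain ⟨a, ha, rfl⟩ := Finset.mem_image.mp hx
      have hba := hSbds a ha
      have := hcolV a t hba.1 hba.2 ht1 ht2 (hSc a ha)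
      rw [Finset.mem_Icc, hgdef]
      exact ⟨Nat.le_add_left 1 _, this.2.2⟩
    · rw [Finset.card_image_of_injOn, hScard]
      intro x hx y hy hxy
      rw [Finset.mem_coe] at hx hy
      by_contra hne
      rcases Nat.lt_or_ge x y with h|h
      · have := (hkey x hx y hy h).2; omega
      · have hyx : y < x := by omega
        have := (hkey y hy x hx hyx).2; omega
    · intro a ha
      obtain ⟨x, hx, rfl⟩ := Finset.mem_image.mp ha
      have hbx := hSbds x hx
      exact (hcolV x t hbx.1 hbx.2 ht1 ht2 (hSc x hx)).2.1
    · intro u hu v hv huv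
      obtain ⟨a, ha, rfl⟩ := Finset.mem_image.mp hu
      obtain ⟨b, hb, rfl⟩ := Finset.mem_image.mp hv
      have hab : a < b := by
        rcases lt_trichotomy a b with h|h|h
        · exact h
        · rw [h] at huv; exact absurd huv (lt_irrefl _)
        · have := (hkey b hb a ha h).2; omega
      obtain ⟨k1, k2⟩ := hkey a ha b hb hab
      rw [k1, hgdef]
      have hba := hSbds a ha
      have hbb := hSbds b hb
      exact (hcolV (b-a) t (by omega) (by omega) ht1 ht2 (hSd a ha b hb hab)).2.1



lemma ramsey_aux : ∀ (n : ℕ) (C : Finset ℕ), C.Nonempty → ∀ tgt : ℕ → ℕ,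
    (∑ s ∈ C, tgt s) = n →
    ∃ N, 0 < N ∧ ∀ col : ℕ → ℕ → ℕ, (∀ i j, col i j = col j i) →
      (∀ i j, i < N → j < N → i ≠ j → col i j ∈ C) →
      ∃ s ∈ C, ∃ S : Finset ℕ, (∀ v ∈ S, v < N) ∧ S.card = tgt s ∧
        ∀ i ∈ S, ∀ j ∈ S, i ≠ j → col i j = s := by
  intro n
  induction n using Nat.strong_induction_on with
  | _ n IH =>
    intro C hC tgt hsum
    by_cases hbase : ∃ s ∈ C, tgt s ≤ 1
    · obtain ⟨s, hs, hts⟩ := hbase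
      refine ⟨1, one_pos, fun col hsym hcol => ⟨s, hs, Finset.range (tgt s), ?_, by simp, ?_⟩⟩
      · intro v hv; simp only [Finset.mem_range] at hv; omega
      · intro i hi j hj hij
        simp only [Finset.mem_range] at hi hj; omega
    · push_neg at hbase
      have Hex : ∀ s, ∃ Ns, 0 < Ns ∧ (s ∈ C →
          ∀ col : ℕ → ℕ → ℕ, (∀ i j, col i j = col j i) →
          (∀ i j, i < Ns → j < Ns → i ≠ j → col i j ∈ C) →
          ∃ s' ∈ C, ∃ S : Finset ℕ, (∀ v ∈ S, v < Ns) ∧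
            S.card = Function.update tgt s (tgt s - 1) s' ∧
            ∀ i ∈ S, ∀ j ∈ S, i ≠ j → col i j = s') := by
        intro s
        by_cases hs : s ∈ C
        · have h2 : tgt s + ∑ x ∈ C.erase s, tgt x = n := by
            rw [Finset.add_sum_erase _ _ hs]; exact hsum
          have h3 : 2 ≤ tgt s := hbase s hs
          have hsum' : ∑ s' ∈ C, Function.update tgt s (tgt s - 1) s' = n - 1 := by
            rw [Finset.sum_update_of_mem hs, Finset.sdiff_singleton_eq_erase]
            omega
          obtain ⟨Ns, hNs, hprop⟩ := IH (n-1) (by omega) C hC _ hsum'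
          exact ⟨Ns, hNs, fun _ => hprop⟩
        · exact ⟨1, one_pos, fun h => absurd h hs⟩
      choose f hf0 hf using Hex
      refine ⟨1 + ∑ s ∈ C, f s, by omega, ?_⟩
      set N := 1 + ∑ s ∈ C, f s with hN
      intro col hsym hcol
      set A : ℕ → Finset ℕ := fun s => (Finset.Ico 1 N).filter (fun j => col 0 j = s) with hA
      have hcover : Finset.Ico 1 N ⊆ C.biUnion A := by
        intro j hj
        simp only [Finset.mem_Ico] at hj
        have hjC : col 0 j ∈ C := hcol 0 j (by omega) (by omega) (by omega)
        refine Finset.mem_biUnion.mpr ⟨col 0 j, hjC, ?_⟩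
        simp only [hA, Finset.mem_filter, Finset.mem_Ico]
        exact ⟨⟨hj.1, hj.2⟩, trivial⟩
      have hcard : ∑ s ∈ C, f s ≤ ∑ s ∈ C, (A s).card := by
        calc ∑ s ∈ C, f s = (Finset.Ico 1 N).card := by rw [Nat.card_Ico]; omega
          _ ≤ (C.biUnion A).card := Finset.card_le_card hcover
          _ ≤ ∑ s ∈ C, (A s).card := Finset.card_biUnion_le
      have hex2 : ∃ s ∈ C, f s ≤ (A s).card := by
        by_contra hcon
        push_neg at hcon
        have := Finset.sum_lt_sum_of_nonempty hC hcon
        omega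
      obtain ⟨s, hsC, hAs⟩ := hex2
      obtain ⟨A', hA'sub, hA'card⟩ := Finset.exists_subset_card_eq hAs
      set e := A'.orderIsoOfFin hA'card with he
      set g : ℕ → ℕ := fun i => if h : i < f s then (e ⟨i, h⟩ : ℕ) else i with hg
      have hgA : ∀ i, i < f s → g i ∈ A' := by
        intro i hi
        simp only [hg, dif_pos hi]
        exact (e ⟨i, hi⟩).2
      have hgIco : ∀ i, i < f s → g i ∈ Finset.Ico 1 N ∧ col 0 (g i) = s := by
        intro i hi
        have := hA'sub (hgA i hi)
        simp only [hA, Finset.mem_filter] at this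
        exact this
      have hgmono : ∀ i j, i < j → j < f s → g i < g j := by
        intro i j hij hj
        have hi : i < f s := hij.trans hj
        simp only [hg, dif_pos hi, dif_pos hj]
        exact e.strictMono (show (⟨i, hi⟩ : Fin (f s)) < ⟨j, hj⟩ from hij)
      have hgne : ∀ i j, i < f s → j < f s → i ≠ j → g i ≠ g j := by
        intro i j hi hj hij
        rcases lt_trichotomy i j with h|h|h
        · exact ne_of_lt (hgmono i j h hj)
        · exact absurd h hij
        · exact (ne_of_lt (hgmono j i h hi)).symm
      obtain ⟨s', hs'C, T, hTlt, hTcard, hTmono⟩ :=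
        hf s hsC (fun i j => col (g i) (g j)) (fun i j => hsym _ _)
          (by
            intro i j hi hj hij
            have h1 := (hgIco i hi).1
            have h2 := (hgIco j hj).1
            simp only [Finset.mem_Ico] at h1 h2
            exact hcol _ _ h1.2 h2.2 (hgne i j hi hj hij))
      have hinjT : Set.InjOn g ↑T := by
        intro x hx y hy hxy
        by_contra hne
        exact hgne x y (hTlt x hx) (hTlt y hy) hne hxy
      by_cases hss : s' = s
      · subst hss
        refine ⟨s', hsC, insert 0 (T.image g), ?_, ?_, ?_⟩
        · intro v hv
          rcases Finset.mem_insert.mp hv with h|h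
          · omega
          · obtain ⟨t, ht, rfl⟩ := Finset.mem_image.mp h
            have := (hgIco t (hTlt t ht)).1
            simp only [Finset.mem_Ico] at this
            omega
        · rw [Finset.card_insert_of_notMem, Finset.card_image_of_injOn hinjT, hTcard,
            Function.update_self]
          · have := hbase s' hsC; omega
          · intro hmem
            obtain ⟨t, ht, h0⟩ := Finset.mem_image.mp hmem
            have := (hgIco t (hTlt t ht)).1
            simp only [Finset.mem_Ico] at this
            omega
        · intro i hi j hj hij
          rcases Finset.mem_insert.mp hi with rfl|hi'
          · obtain ⟨t, ht, rfl⟩ := Finset.mem_image.mp ((Finset.mem_insert.mp hj).resolve_left (Ne.symm hij))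
            exact (hgIco t (hTlt t ht)).2
          · obtain ⟨t, ht, rfl⟩ := Finset.mem_image.mp hi'
            rcases Finset.mem_insert.mp hj with rfl|hj'
            · rw [hsym]; exact (hgIco t (hTlt t ht)).2
            · obtain ⟨u, hu, rfl⟩ := Finset.mem_image.mp hj'
              have htu : t ≠ u := fun h => hij (by rw [h])
              exact hTmono t ht u hu htu
      · refine ⟨s', hs'C, T.image g, ?_, ?_, ?_⟩
        · intro v hv
          obtain ⟨t, ht, rfl⟩ := Finset.mem_image.mp hv
          have := (hgIco t (hTlt t ht)).1
          simp only [Finset.mem_Ico] at this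
          omega
        · rw [Finset.card_image_of_injOn hinjT, hTcard, Function.update_of_ne hss]
        · intro i hi j hj hij
          obtain ⟨t, ht, rfl⟩ := Finset.mem_image.mp hi
          obtain ⟨u, hu, rfl⟩ := Finset.mem_image.mp hj
          have htu : t ≠ u := fun h => hij (by rw [h])
          exact hTmono t ht u hu htu

/-- Generalised Construction Theorem: given a linear colouring `U` of
`K_m` whose template `L_q = {h : cU h = q}` is difference-free and contains
`m-1`, a linear colouring `V` of `K_n` with no monochromatic `K_{tgt (q+t)}`
in any of its colours `q+t`, and assuming the compound colouring `W` restricted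
to lengths `{1,…,Q(m-2)}` has no monochromatic witness for `K_{tgt s}` in any
colour `s < q` of `U` (where `tgt s - 1 ≤ Q` for those `s`), the full compound
colouring `W` has no monochromatic `K_{tgt s}` in any colour `s ∈ {1,…,q-1}`
and no monochromatic `K_{tgt (q+t)}` in any colour `q+t`, `1 ≤ t ≤ r`; hence
the corresponding Ramsey number exceeds `(m-1)(n-1)+1`. -/
theorem generalised_construction (m n q r Q : ℕ) (cU cV cW : ℕ → ℕ)
    (tgt : ℕ → ℕ)
    (hm : 2 ≤ m) (hn : 2 ≤ n) (hq : 2 ≤ q) (hr : 1 ≤ r)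
    (hUcol : ∀ h, 1 ≤ h → h ≤ m - 1 → 1 ≤ cU h ∧ cU h ≤ q)
    (hVcol : ∀ μ, 1 ≤ μ → μ ≤ n - 1 → q + 1 ≤ cV μ ∧ cV μ ≤ q + r)
    (htgt : ∀ s, (1 ≤ s ∧ s ≤ q - 1) ∨ (q + 1 ≤ s ∧ s ≤ q + r) → 2 ≤ tgt s)
    (htmpl : cU (m - 1) = q)
    (hdf : ∀ a b, 1 ≤ a → a < b → b ≤ m - 1 → cU a = q → cU b = q →
      cU (b - a) ≠ q)
    (hQ : ∀ s, 1 ≤ s → s ≤ q - 1 → tgt s - 1 ≤ Q)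
    (hW : ∀ l, 1 ≤ l → l ≤ (n - 1) * (m - 1) →
      cW l = if cU ((l - 1) % (m - 1) + 1) = q then cV ((l - 1) / (m - 1) + 1)
             else cU ((l - 1) % (m - 1) + 1))
    (hWres : ∀ s, 1 ≤ s → s ≤ q - 1 →
      ¬ ∃ S : Finset ℕ, S ⊆ Finset.Icc 1 (Q * (m - 2)) ∧
        S.card = tgt s - 1 ∧ (∀ a ∈ S, cW a = s) ∧
        ∀ a ∈ S, ∀ b ∈ S, a < b → cW (b - a) = s)
    (hVfree : ∀ t, 1 ≤ t → t ≤ r →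
      ¬ ∃ S : Finset ℕ, S ⊆ Finset.Icc 1 (n - 1) ∧
        S.card = tgt (q + t) - 1 ∧ (∀ a ∈ S, cV a = q + t) ∧
        ∀ a ∈ S, ∀ b ∈ S, a < b → cV (b - a) = q + t) :
    (∀ s, 1 ≤ s → s ≤ q - 1 →
      ¬ ∃ S : Finset ℕ, S ⊆ Finset.Icc 1 ((n - 1) * (m - 1)) ∧
        S.card = tgt s - 1 ∧ (∀ a ∈ S, cW a = s) ∧
        ∀ a ∈ S, ∀ b ∈ S, a < b → cW (b - a) = s) ∧
    (∀ t, 1 ≤ t → t ≤ r →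
      ¬ ∃ S : Finset ℕ, S ⊆ Finset.Icc 1 ((n - 1) * (m - 1)) ∧
        S.card = tgt (q + t) - 1 ∧ (∀ a ∈ S, cW a = q + t) ∧
        ∀ a ∈ S, ∀ b ∈ S, a < b → cW (b - a) = q + t) ∧
    (m - 1) * (n - 1) + 1 <
      mramsey (Finset.Icc 1 (q - 1) ∪ Finset.Icc (q + 1) (q + r)) tgt := by
  obtain ⟨P1, P2⟩ := generalised_construction_parts m n q r Q cU cV cW tgt
    hm hn hq hr hUcol hVcol htmpl hdf hQ hW hWres hVfree
  refine ⟨P1, P2, ?_⟩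
  set colors := Finset.Icc 1 (q - 1) ∪ Finset.Icc (q + 1) (q + r) with hcolors
  have hM : 0 < m - 1 := by omega
  have hmodlt : ∀ l : ℕ, (l - 1) % (m - 1) < m - 1 := fun l => Nat.mod_lt _ hM
  have hmulcomm : (m - 1) * (n - 1) = (n - 1) * (m - 1) := Nat.mul_comm _ _
  -- values of cW are legal colours
  have hcolmem : ∀ l, 1 ≤ l → l ≤ (n - 1) * (m - 1) → cW l ∈ colors := by
    intro l h1 h2
    have hw := hW l h1 h2
    rw [hcolors, Finset.mem_union, Finset.mem_Icc, Finset.mem_Icc]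
    by_cases hcase : cU ((l - 1) % (m - 1) + 1) = q
    · rw [if_pos hcase] at hw
      right
      have hdiv : (l - 1) / (m - 1) < n - 1 := by
        rw [Nat.div_lt_iff_lt_mul hM]; omega
      have := hVcol ((l - 1) / (m - 1) + 1) (Nat.le_add_left 1 _) hdiv
      omega
    · rw [if_neg hcase] at hw
      left
      have := hUcol ((l - 1) % (m - 1) + 1) (Nat.le_add_left 1 _) (hmodlt l)
      omega
  rw [mramsey]
  set Pset : Set ℕ := {N | ∀ col : ℕ → ℕ → ℕ, (∀ i j, col i j = col j i) →
    (∀ i j, i < N → j < N → i ≠ j → col i j ∈ colors) →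
    ∃ s ∈ colors, ∃ S : Finset ℕ, (∀ v ∈ S, v < N) ∧ S.card = tgt s ∧
      ∀ i ∈ S, ∀ j ∈ S, i ≠ j → col i j = s} with hPset
  have key : ∀ N ∈ Pset, (m - 1) * (n - 1) + 1 < N := by
    intro N hN
    by_contra hle
    push_neg at hle
    simp only [hPset, Set.mem_setOf_eq] at hN
    set col : ℕ → ℕ → ℕ := fun i j => cW (max i j - min i j) with hcol
    have hcoldef : ∀ i j, col i j = cW (max i j - min i j) := fun i j => rfl
    have hsym : ∀ i j, col i j = col j i := by
      intro i j
      rw [hcoldef, hcoldef, max_comm, min_comm]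
    have hlen : ∀ i j, i < N → j < N → i ≠ j →
        1 ≤ max i j - min i j ∧ max i j - min i j ≤ (n - 1) * (m - 1) := by
      intro i j hi hj hij
      rcases lt_or_gt_of_ne hij with h|h
      · rw [max_eq_right h.le, min_eq_left h.le]; omega
      · rw [max_eq_left h.le, min_eq_right h.le]; omega
    have hcolval : ∀ i j, i < N → j < N → i ≠ j → col i j ∈ colors := by
      intro i j hi hj hij
      rw [hcoldef]
      exact hcolmem _ (hlen i j hi hj hij).1 (hlen i j hi hj hij).2
    obtain ⟨s, hs, S, hSlt, hScard, hSmono⟩ := hN col hsym hcolval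
    have hs' := Finset.mem_union.mp hs
    rw [Finset.mem_Icc, Finset.mem_Icc] at hs'
    have htgt2 : 2 ≤ tgt s := htgt s hs'
    have hSne : S.Nonempty := by
      rw [← Finset.card_pos, hScard]; omega
    set v0 := S.min' hSne with hv0
    have hv0S : v0 ∈ S := S.min'_mem hSne
    have herase : ∀ a ∈ S.erase v0, v0 < a ∧ a ∈ S := by
      intro a ha
      have h1 := Finset.mem_of_mem_erase ha
      have h2 := Finset.ne_of_mem_erase ha
      exact ⟨lt_of_le_of_ne (S.min'_le a h1) (Ne.symm h2), h1⟩
    set S' : Finset ℕ := (S.erase v0).image (fun a => a - v0) with hS'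
    have hsub : S' ⊆ Finset.Icc 1 ((n - 1) * (m - 1)) := by
      intro x hx
      obtain ⟨a, ha, rfl⟩ := Finset.mem_image.mp hx
      obtain ⟨h1, h2⟩ := herase a ha
      have := hSlt a h2
      rw [Finset.mem_Icc]
      omega
    have hcard : S'.card = tgt s - 1 := by
      rw [hS', Finset.card_image_of_injOn, Finset.card_erase_of_mem hv0S, hScard]
      intro x hx y hy hxy
      rw [Finset.mem_coe] at hx hy
      have h1 := (herase x hx).1
      have h2 := (herase y hy).1
      have hxy' : x - v0 = y - v0 := hxy
      omega
    have hcw : ∀ x ∈ S', cW x = s := by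
      intro x hx
      obtain ⟨a, ha, rfl⟩ := Finset.mem_image.mp hx
      obtain ⟨h1, h2⟩ := herase a ha
      have hmono := hSmono v0 hv0S a h2 (ne_of_lt h1)
      rw [hcoldef, max_eq_right h1.le, min_eq_left h1.le] at hmono
      exact hmono
    have hdiff : ∀ x ∈ S', ∀ y ∈ S', x < y → cW (y - x) = s := by
      intro x hx y hy hxy
      obtain ⟨a, ha, hax⟩ := Finset.mem_image.mp hx
      obtain ⟨b, hb, hby⟩ := Finset.mem_image.mp hy
      obtain ⟨ha1, ha2⟩ := herase a ha
      obtain ⟨hb1, hb2⟩ := herase b hb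
      have hax' : a - v0 = x := hax
      have hby' : b - v0 = y := hby
      have hab : a < b := by omega
      have hmono := hSmono a ha2 b hb2 (ne_of_lt hab)
      rw [hcoldef, max_eq_right hab.le, min_eq_left hab.le] at hmono
      have heq : y - x = b - a := by omega
      rw [heq]
      exact hmono
    rcases hs' with h|h
    · exact P1 s h.1 h.2 ⟨S', hsub, hcard, hcw, hdiff⟩
    · have hqt : q + (s - q) = s := by omega
      refine P2 (s - q) (by omega) (by omega) ⟨S', hsub, ?_, ?_, ?_⟩
      · rw [hqt]; exact hcard
      · rw [hqt]; exact hcw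
      · rw [hqt]; exact hdiff
  have hne : Pset.Nonempty := by
    have hmem : q + 1 ∈ colors := by
      rw [hcolors, Finset.mem_union, Finset.mem_Icc, Finset.mem_Icc]
      right; omega
    obtain ⟨N0, hN0pos, hN0⟩ := ramsey_aux (∑ s ∈ colors, tgt s) colors
      ⟨q + 1, hmem⟩ tgt rfl
    exact ⟨N0, by simpa [hPset, Set.mem_setOf_eq] using hN0⟩
  exact key _ (Nat.sInf_mem hne)
end

section
/- For every r ≥ 1, R_r(5) ≥ (R_r(3) - 1)² + 1, where R_r(k) denotes the r-color diagonal Ramsey number. Equivalently, if there exists an r-coloring of the edges of the complete graph on (R_r(3)-1)² vertices, constructed as the product coloring from an r-coloring of K_{R_r(3)-1} with no monochromatic triangle, then it has no monochromatic K_5. -/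
set_option linter.unusedVariables false

def RamseyProp (r : ℕ) (a : ℕ → ℕ) (N : ℕ) : Prop :=
  ∀ col : ℕ → ℕ → ℕ, (∀ i j, col i j = col j i) →
    (∀ i j, i < N → j < N → i ≠ j → col i j < r) →
    ∃ s < r, ∃ S : Finset ℕ, (∀ v ∈ S, v < N) ∧ S.card = a s ∧
      ∀ i ∈ S, ∀ j ∈ S, i ≠ j → col i j = s

lemma ramsey_exists (r : ℕ) (hr : 1 ≤ r) (a : ℕ → ℕ) : ∃ N, RamseyProp r a N := by
  generalize hn : (∑ s ∈ Finset.range r, a s) = n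
  induction n using Nat.strong_induction_on generalizing a with
  | _ n ih =>
  by_cases hsmall : ∃ s < r, a s ≤ 1
  · obtain ⟨s, hs, has⟩ := hsmall
    refine ⟨1, fun col hsym hval => ⟨s, hs, ?_⟩⟩
    interval_cases h : a s
    · exact ⟨∅, by simp, by simp [h], by simp⟩
    · refine ⟨{0}, by simp, by simp [h], ?_⟩
      intro i hi j hj hij
      simp only [Finset.mem_singleton] at hi hj
      omega
  · push_neg at hsmall
    have h2 : ∀ s < r, 2 ≤ a s := fun s hs => hsmall s hs
    have hn1 : 1 ≤ n := by
      have h0r : (0:ℕ) ∈ Finset.range r := Finset.mem_range.mpr hr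
      have := Finset.single_le_sum (f := a) (fun i _ => Nat.zero_le _) h0r
      have := h2 0 hr
      omega
    have IH : ∀ s, ∃ N, s < r → RamseyProp r (Function.update a s (a s - 1)) N := by
      intro s
      by_cases hs : s < r
      · have hsum : (∑ t ∈ Finset.range r, Function.update a s (a s - 1) t) = n - 1 := by
          have hmem : s ∈ Finset.range r := Finset.mem_range.mpr hs
          rw [Finset.sum_update_of_mem hmem]
          have := (Finset.add_sum_erase _ a hmem)
          rw [Finset.sdiff_singleton_eq_erase]
          have := h2 s hs
          omega
        obtain ⟨N, hN⟩ := ih (n - 1) (by omega) _ hsum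
        exact ⟨N, fun _ => hN⟩
      · exact ⟨0, fun h => absurd h hs⟩
    choose Nf hNf using IH
    refine ⟨1 + ∑ s ∈ Finset.range r, Nf s, ?_⟩
    set N := 1 + ∑ s ∈ Finset.range r, Nf s with hNdef
    intro col hsym hval
    have hmaps : ∀ u ∈ Finset.Ico 1 N, col 0 u ∈ Finset.range r := by
      intro u hu
      rw [Finset.mem_Ico] at hu
      exact Finset.mem_range.mpr (hval 0 u (by omega) hu.2 (by omega))
    have hcardsum := Finset.card_eq_sum_card_fiberwise hmaps
    have hIcocard : (Finset.Ico 1 N).card = ∑ s ∈ Finset.range r, Nf s := by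
      rw [Nat.card_Ico]; omega
    obtain ⟨s0, hs0r, hs0⟩ := Finset.exists_le_of_sum_le (s := Finset.range r) (f := Nf)
      (g := fun b => ((Finset.Ico 1 N).filter (fun u => col 0 u = b)).card)
      (Finset.nonempty_range_iff.mpr (by omega)) (le_of_eq (by rw [← hcardsum, hIcocard]))
    rw [Finset.mem_range] at hs0r
    set W := (Finset.Ico 1 N).filter (fun u => col 0 u = s0) with hW
    obtain ⟨W', hW'sub, hW'card⟩ := Finset.exists_subset_card_eq hs0
    set M := Nf s0
    let e := W'.orderEmbOfFin hW'card
    let w : ℕ → ℕ := fun i => if h : i < M then e ⟨i, h⟩ else i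
    have hwmem : ∀ i, i < M → w i ∈ W' := by
      intro i hi
      simp only [w, dif_pos hi]
      exact W'.orderEmbOfFin_mem hW'card ⟨i, hi⟩
    have hwW : ∀ i, i < M → w i ∈ W := fun i hi => hW'sub (hwmem i hi)
    have hwIco : ∀ i, i < M → 1 ≤ w i ∧ w i < N := by
      intro i hi
      have := hwW i hi
      rw [hW, Finset.mem_filter, Finset.mem_Ico] at this
      exact this.1
    have hwcol : ∀ i, i < M → col 0 (w i) = s0 := by
      intro i hi
      have := hwW i hi
      rw [hW, Finset.mem_filter] at this
      exact this.2
    have hwinj : ∀ i j, i < M → j < M → w i = w j → i = j := by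
      intro i j hi hj hij
      simp only [w, dif_pos hi, dif_pos hj] at hij
      have := e.injective hij
      exact Fin.mk.injEq .. ▸ (by injection this)
    obtain ⟨s1, hs1r, S1, hS1lt, hS1card, hS1mono⟩ :=
      hNf s0 hs0r (fun i j => col (w i) (w j)) (fun i j => hsym _ _)
        (fun i j hi hj hij => hval _ _ (hwIco i hi).2 (hwIco j hj).2
          (fun h => hij (hwinj i j hi hj h)))
    by_cases hcase : s1 = s0
    · subst hcase
      refine ⟨s1, hs1r, insert 0 (S1.image w), ?_, ?_, ?_⟩
      · intro v hv
        rcases Finset.mem_insert.mp hv with h | h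
        · omega
        · obtain ⟨i, hi, rfl⟩ := Finset.mem_image.mp h
          exact (hwIco i (hS1lt i hi)).2
      · have h0 : 0 ∉ S1.image w := by
          intro h
          obtain ⟨i, hi, hwi⟩ := Finset.mem_image.mp h
          have := (hwIco i (hS1lt i hi)).1
          omega
        rw [Finset.card_insert_of_notMem h0,
          Finset.card_image_of_injOn (fun i hi j hj hij => hwinj i j (hS1lt i hi) (hS1lt j hj) hij),
          hS1card, Function.update_self]
        have := h2 s1 hs1r
        omega
      · intro i hi j hj hij
        rcases Finset.mem_insert.mp hi with rfl | hi'
        · obtain ⟨i', hi', rfl⟩ := Finset.mem_image.mp ((Finset.mem_insert.mp hj).resolve_left (Ne.symm hij))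
          exact hwcol i' (hS1lt i' hi')
        · rcases Finset.mem_insert.mp hj with rfl | hj'
          · obtain ⟨i', hii', rfl⟩ := Finset.mem_image.mp hi'
            rw [hsym]; exact hwcol i' (hS1lt i' hii')
          · obtain ⟨x, hx, rfl⟩ := Finset.mem_image.mp hi'
            obtain ⟨y, hy, rfl⟩ := Finset.mem_image.mp hj'
            exact hS1mono x hx y hy (fun h => hij (by rw [h]))
    · refine ⟨s1, hs1r, S1.image w, ?_, ?_, ?_⟩
      · intro v hv
        obtain ⟨i, hi, rfl⟩ := Finset.mem_image.mp hv
        exact (hwIco i (hS1lt i hi)).2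
      · rw [Finset.card_image_of_injOn (fun i hi j hj hij => hwinj i j (hS1lt i hi) (hS1lt j hj) hij),
          hS1card, Function.update_of_ne hcase]
      · intro x hx y hy hxy
        obtain ⟨i, hi, rfl⟩ := Finset.mem_image.mp hx
        obtain ⟨j, hj, rfl⟩ := Finset.mem_image.mp hy
        exact hS1mono i hi j hj (fun h => hxy (by rw [h]))


lemma no_mono_K5 (n : ℕ) (c : ℕ → ℕ → ℕ) (hsymm : ∀ i j, c i j = c j i)
    (htri : ¬ ∃ x y z : ℕ, x < n ∧ y < n ∧ z < n ∧ x ≠ y ∧ y ≠ z ∧ x ≠ z ∧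
        c x y = c y z ∧ c y z = c x z) :
    ¬ ∃ s, ∃ S : Finset (ℕ × ℕ), (∀ v ∈ S, v.1 < n ∧ v.2 < n) ∧
        S.card = 5 ∧ ∀ p ∈ S, ∀ q ∈ S, p ≠ q →
          (if p.1 ≠ q.1 then c p.1 q.1 else c p.2 q.2) = s := by
  rintro ⟨s, S, hlt, hcard, hmono⟩
  have key1 : ∀ p ∈ S, ∀ q ∈ S, p.1 ≠ q.1 → c p.1 q.1 = s := by
    intro p hp q hq hne
    have := hmono p hp q hq (fun h => hne (by rw [h]))
    rwa [if_pos hne] at this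
  set A := S.image Prod.fst with hA
  have hA2 : A.card ≤ 2 := by
    by_contra h
    push_neg at h
    obtain ⟨a, b, d, ha, hb, hd, hab, had, hbd⟩ := Finset.two_lt_card_iff.mp h
    obtain ⟨p, hp, hpa⟩ := Finset.mem_image.mp ha
    obtain ⟨q, hq, hqb⟩ := Finset.mem_image.mp hb
    obtain ⟨u, hu, hud⟩ := Finset.mem_image.mp hd
    refine htri ⟨a, b, d, ?_, ?_, ?_, hab, hbd, had, ?_, ?_⟩
    · exact hpa ▸ (hlt p hp).1
    · exact hqb ▸ (hlt q hq).1
    · exact hud ▸ (hlt u hu).1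
    · rw [← hpa, ← hqb, key1 p hp q hq (by rw [hpa, hqb]; exact hab)]
      rw [← hud, key1 q hq u hu (by rw [hqb, hud]; exact hbd)]
    · rw [← hqb, ← hud, key1 q hq u hu (by rw [hqb, hud]; exact hbd)]
      rw [← hpa, key1 p hp u hu (by rw [hpa, hud]; exact had)]
  have hmaps : ∀ p ∈ S, p.1 ∈ A := fun p hp => Finset.mem_image_of_mem _ hp
  have hlt5 : A.card * 2 < S.card := by omega
  obtain ⟨a, _, hfib⟩ := Finset.exists_lt_card_fiber_of_mul_lt_card_of_maps_to hmaps hlt5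
  obtain ⟨p, q, u, hp, hq, hu, hpq, hpu, hqu⟩ := Finset.two_lt_card_iff.mp hfib
  rw [Finset.mem_filter] at hp hq hu
  have key2 : ∀ x ∈ S, ∀ y ∈ S, x ≠ y → x.1 = y.1 → c x.2 y.2 = s := by
    intro x hx y hy hne heq
    have := hmono x hx y hy hne
    rwa [if_neg (by simp [heq])] at this
  have e1 : p.2 ≠ q.2 := fun h => hpq (Prod.ext (hp.2.trans hq.2.symm) h)
  have e2 : q.2 ≠ u.2 := fun h => hqu (Prod.ext (hq.2.trans hu.2.symm) h)
  have e3 : p.2 ≠ u.2 := fun h => hpu (Prod.ext (hp.2.trans hu.2.symm) h)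
  refine htri ⟨p.2, q.2, u.2, (hlt p hp.1).2, (hlt q hq.1).2, (hlt u hu.1).2, e1, e2, e3, ?_, ?_⟩
  · rw [key2 p hp.1 q hq.1 hpq (hp.2.trans hq.2.symm),
      key2 q hq.1 u hu.1 hqu (hq.2.trans hu.2.symm)]
  · rw [key2 q hq.1 u hu.1 hqu (hq.2.trans hu.2.symm),
      key2 p hp.1 u hu.1 hpu (hp.2.trans hu.2.symm)]


/-- The `r`-colour diagonal Ramsey number `R_r(k)`: the least `N` such that
every symmetric `r`-colouring of the edges of `K_N` contains a monochromatic
`K_k`. -/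
noncomputable def diagRamsey (r k : ℕ) : ℕ :=
  sInf {N | ∀ col : ℕ → ℕ → ℕ, (∀ i j, col i j = col j i) →
    (∀ i j, i < N → j < N → i ≠ j → col i j < r) →
    ∃ s < r, ∃ S : Finset ℕ, (∀ v ∈ S, v < N) ∧ S.card = k ∧
      ∀ i ∈ S, ∀ j ∈ S, i ≠ j → col i j = s}

/-- Abbott's inequality `R_r(5) ≥ (R_r(3) - 1)² + 1`, together with the fact
underlying it: the product colouring of `K_{n²}` built from a triangle-free
`r`-colouring `c` of `K_n` (edge `((a,b),(a',b'))` gets colour `c a a'` if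
`a ≠ a'`, else `c b b'`) contains no monochromatic `K_5`. -/
theorem abbott_R5 (r : ℕ) (hr : 1 ≤ r) :
    (diagRamsey r 3 - 1) ^ 2 + 1 ≤ diagRamsey r 5 ∧
    ∀ (n : ℕ) (c : ℕ → ℕ → ℕ), (∀ i j, c i j = c j i) →
      (¬ ∃ x y z : ℕ, x < n ∧ y < n ∧ z < n ∧ x ≠ y ∧ y ≠ z ∧ x ≠ z ∧
        c x y = c y z ∧ c y z = c x z) →
      ¬ ∃ s, ∃ S : Finset (ℕ × ℕ), (∀ v ∈ S, v.1 < n ∧ v.2 < n) ∧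
        S.card = 5 ∧ ∀ p ∈ S, ∀ q ∈ S, p ≠ q →
          (if p.1 ≠ q.1 then c p.1 q.1 else c p.2 q.2) = s := by
  constructor
  · -- Part 1
    set T3 : Set ℕ := {N | ∀ col : ℕ → ℕ → ℕ, (∀ i j, col i j = col j i) →
      (∀ i j, i < N → j < N → i ≠ j → col i j < r) →
      ∃ s < r, ∃ S : Finset ℕ, (∀ v ∈ S, v < N) ∧ S.card = 3 ∧
        ∀ i ∈ S, ∀ j ∈ S, i ≠ j → col i j = s} with hT3
    set T5 : Set ℕ := {N | ∀ col : ℕ → ℕ → ℕ, (∀ i j, col i j = col j i) →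
      (∀ i j, i < N → j < N → i ≠ j → col i j < r) →
      ∃ s < r, ∃ S : Finset ℕ, (∀ v ∈ S, v < N) ∧ S.card = 5 ∧
        ∀ i ∈ S, ∀ j ∈ S, i ≠ j → col i j = s} with hT5
    have hd3 : diagRamsey r 3 = sInf T3 := rfl
    have hd5 : diagRamsey r 5 = sInf T5 := rfl
    have h3ne : T3.Nonempty := by
      obtain ⟨N, hN⟩ := ramsey_exists r hr (fun _ => 3)
      exact ⟨N, hN⟩
    have h5ne : T5.Nonempty := by
      obtain ⟨N, hN⟩ := ramsey_exists r hr (fun _ => 5)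
      exact ⟨N, hN⟩
    have h0 : (0 : ℕ) ∉ T3 := by
      intro h
      obtain ⟨s, hs, S, hSlt, hScard, _⟩ := h (fun _ _ => 0) (fun _ _ => rfl)
        (fun i j hi _ _ => absurd hi (by omega))
      have : S.Nonempty := Finset.card_pos.mp (by omega)
      obtain ⟨v, hv⟩ := this
      exact absurd (hSlt v hv) (by omega)
    have hm1 : 1 ≤ sInf T3 := by
      rcases Nat.eq_zero_or_pos (sInf T3) with h | h
      · exact absurd (h ▸ Nat.sInf_mem h3ne) h0
      · exact h
    have hnT3 : diagRamsey r 3 - 1 ∉ T3 := Nat.notMem_of_lt_sInf (by omega)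
    obtain ⟨n, hn⟩ : ∃ n, diagRamsey r 3 - 1 = n := ⟨_, rfl⟩
    rw [hn] at hnT3 ⊢
    rw [hT3, Set.mem_setOf_eq] at hnT3
    push_neg at hnT3
    obtain ⟨c, hcsym, hcval, hcno⟩ := hnT3
    have htri : ¬ ∃ x y z : ℕ, x < n ∧ y < n ∧ z < n ∧ x ≠ y ∧ y ≠ z ∧ x ≠ z ∧
        c x y = c y z ∧ c y z = c x z := by
      rintro ⟨x, y, z, hx, hy, hz, hxy, hyz, hxz, e1, e2⟩
      have hmem : ∀ v ∈ ({x, y, z} : Finset ℕ), v < n := by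
        intro v hv
        simp only [Finset.mem_insert, Finset.mem_singleton] at hv
        rcases hv with rfl | rfl | rfl <;> assumption
      have hcard : ({x, y, z} : Finset ℕ).card = 3 := by
        rw [Finset.card_insert_of_notMem (by simp [hxy, hxz]),
          Finset.card_insert_of_notMem (by simp [hyz]), Finset.card_singleton]
      obtain ⟨i, hi, j, hj, hij, hne⟩ :=
        hcno (c x y) (hcval x y hx hy hxy) {x, y, z} hmem hcard
      apply hne
      simp only [Finset.mem_insert, Finset.mem_singleton] at hi hj
      rcases hi with rfl | rfl | rfl <;> rcases hj with rfl | rfl | rfl <;>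
        first
          | exact absurd rfl hij
          | exact rfl
          | exact (e1.trans e2).symm
          | exact hcsym _ _
          | exact e1.symm
          | exact (hcsym _ _).trans (e1.trans e2).symm
          | exact (hcsym _ _).trans e1.symm
    -- n^2 ∉ T5
    have hn2 : n ^ 2 ∉ T5 := by
      intro h
      rw [hT5, Set.mem_setOf_eq] at h
      set col : ℕ → ℕ → ℕ := fun i j =>
        if i / n = j / n then c (i % n) (j % n) else c (i / n) (j / n) with hcol
      have hcolsym : ∀ i j, col i j = col j i := by
        intro i j
        simp only [hcol]
        by_cases hij : i / n = j / n
        · rw [if_pos hij, if_pos hij.symm, hcsym]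
        · rw [if_neg hij, if_neg (Ne.symm hij), hcsym]
      have hdivlt : ∀ i, i < n ^ 2 → i / n < n ∧ i % n < n := by
        intro i hi
        have hn0 : 0 < n := by
          rcases Nat.eq_zero_or_pos n with h' | h'
          · subst h'; simp at hi
          · exact h'
        constructor
        · exact Nat.div_lt_of_lt_mul (by rw [pow_two] at hi; omega)
        · exact Nat.mod_lt _ hn0
      have hcolval : ∀ i j, i < n ^ 2 → j < n ^ 2 → i ≠ j → col i j < r := by
        intro i j hi hj hij
        obtain ⟨hd1, hm1'⟩ := hdivlt i hi
        obtain ⟨hd2, hm2'⟩ := hdivlt j hj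
        simp only [hcol]
        by_cases h' : i / n = j / n
        · rw [if_pos h']
          refine hcval _ _ hm1' hm2' (fun heq => hij ?_)
          rw [← Nat.div_add_mod i n, ← Nat.div_add_mod j n, h', heq]
        · rw [if_neg h']
          exact hcval _ _ hd1 hd2 h'
      obtain ⟨s, hs, S, hSlt, hScard, hSmono⟩ := h col hcolsym hcolval
      have hn0 : 0 < n := by
        rcases Nat.eq_zero_or_pos n with h' | h'
        · exfalso
          have : S.Nonempty := Finset.card_pos.mp (by omega)
          obtain ⟨v, hv⟩ := this
          have := hSlt v hv
          subst h'; simp at this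
        · exact h'
      refine no_mono_K5 n c hcsym htri ⟨s, S.image (fun v => (v / n, v % n)), ?_, ?_, ?_⟩
      · intro v hv
        obtain ⟨u, hu, rfl⟩ := Finset.mem_image.mp hv
        exact hdivlt u (hSlt u hu)
      · rw [Finset.card_image_of_injOn, hScard]
        intro i _ j _ hij
        simp only [Prod.mk.injEq] at hij
        rw [← Nat.div_add_mod i n, ← Nat.div_add_mod j n, hij.1, hij.2]
      · intro p hp q hq hpq
        obtain ⟨u, hu, rfl⟩ := Finset.mem_image.mp hp
        obtain ⟨v, hv, rfl⟩ := Finset.mem_image.mp hq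
        have huv : u ≠ v := fun h' => hpq (by rw [h'])
        have := hSmono u hu v hv huv
        simp only [hcol] at this
        by_cases h' : u / n = v / n
        · rw [if_neg (by simpa using h')]
          rwa [if_pos h'] at this
        · rw [if_pos (by simpa using h')]
          rwa [if_neg h'] at this
    -- upward closure and conclusion
    rw [hd5]
    refine le_csInf h5ne ?_
    intro M hM
    by_contra hlt
    push_neg at hlt
    have hMn2 : M ≤ n ^ 2 := by omega
    apply hn2
    rw [hT5, Set.mem_setOf_eq]
    intro col hsym hval
    obtain ⟨s, hs, S, hSlt, hScard, hSmono⟩ := hM col hsym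
      (fun i j hi hj hij => hval i j (by omega) (by omega) hij)
    exact ⟨s, hs, S, fun v hv => by have := hSlt v hv; omega, hScard, hSmono⟩
  · -- Part 2
    intro n c hcsym htri
    exact no_mono_K5 n c hcsym htri
end

section
/- Let G be an r-coloring of the edges of K_n and H an r'-coloring of the edges of K_m, where the color sets of G and H are disjoint, and let the lexicographic product coloring of K_{nm} on vertex set {(a,b)} assign to the edge ((a,b),(a',b')) the H-color of (a,a') if a ≠ a', and the G-color of (b,b') otherwise. Then for every H-color t, the clique number of the color-t subgraph of the product equals the clique number of the color-t subgraph of H, and for every G-color s, the clique number of the color-s subgraph of the product equals the clique number of the color-s subgraph of G. -/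
/-- Clique number in colour `t` of an edge-colouring of `K_N` on `{0,…,N-1}`. -/
noncomputable def cliqueNum1 (N : ℕ) (col : ℕ → ℕ → ℕ) (t : ℕ) : ℕ :=
  sSup {k | ∃ S : Finset ℕ, (∀ v ∈ S, v < N) ∧ S.card = k ∧
    ∀ i ∈ S, ∀ j ∈ S, i ≠ j → col i j = t}

/-- Clique number in colour `t` of an edge-colouring of the complete graph on
`{0,…,M-1} × {0,…,N-1}`. -/
noncomputable def cliqueNum2 (M N : ℕ) (col : ℕ × ℕ → ℕ × ℕ → ℕ) (t : ℕ) : ℕ :=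
  sSup {k | ∃ S : Finset (ℕ × ℕ), (∀ v ∈ S, v.1 < M ∧ v.2 < N) ∧ S.card = k ∧
    ∀ p ∈ S, ∀ q ∈ S, p ≠ q → col p q = t}

/-- Lexicographic product colouring with disjoint colour sets: for any colour
`t` of `H`, the clique number of the product in colour `t` equals that of `H`
in colour `t`; and likewise for colours of `G`. -/
theorem lex_product_clique_numbers (m n : ℕ) (hm : 1 ≤ m) (hn : 1 ≤ n)
    (colH colG : ℕ → ℕ → ℕ) (CH CG : Finset ℕ)
    (hHsym : ∀ a a', colH a a' = colH a' a)
    (hGsym : ∀ b b', colG b b' = colG b' b)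
    (hHmem : ∀ a a', a < m → a' < m → a ≠ a' → colH a a' ∈ CH)
    (hGmem : ∀ b b', b < n → b' < n → b ≠ b' → colG b b' ∈ CG)
    (hdisj : Disjoint CH CG)
    (colP : ℕ × ℕ → ℕ × ℕ → ℕ)
    (hP : ∀ p q : ℕ × ℕ,
      colP p q = if p.1 ≠ q.1 then colH p.1 q.1 else colG p.2 q.2) :
    (∀ t ∈ CH, cliqueNum2 m n colP t = cliqueNum1 m colH t) ∧
    (∀ s ∈ CG, cliqueNum2 m n colP s = cliqueNum1 n colG s) := by
  constructor
  · intro t ht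
    unfold cliqueNum2 cliqueNum1
    congr 1
    ext k
    constructor
    · rintro ⟨S, hbd, hcard, hcl⟩
      refine ⟨S.image Prod.fst, ?_, ?_, ?_⟩
      · intro v hv
        obtain ⟨p, hp, rfl⟩ := Finset.mem_image.mp hv
        exact (hbd p hp).1
      · rw [Finset.card_image_of_injOn, hcard]
        intro p hp q hq hpq
        by_contra hne
        have h2 : p.2 ≠ q.2 := fun h => hne (Prod.ext hpq h)
        have := hcl p hp q hq hne
        rw [hP, if_neg (by simp [hpq])] at this
        have hG : t ∈ CG := this ▸ hGmem _ _ (hbd p hp).2 (hbd q hq).2 h2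
        exact (Finset.disjoint_left.mp hdisj ht) hG
      · intro a ha b hb hab
        obtain ⟨p, hp, rfl⟩ := Finset.mem_image.mp ha
        obtain ⟨q, hq, rfl⟩ := Finset.mem_image.mp hb
        have hpq : p ≠ q := fun h => hab (by rw [h])
        have := hcl p hp q hq hpq
        rw [hP, if_pos hab] at this
        exact this
    · rintro ⟨S, hbd, hcard, hcl⟩
      refine ⟨S.image (fun a => (a, 0)), ?_, ?_, ?_⟩
      · intro v hv
        obtain ⟨a, ha, rfl⟩ := Finset.mem_image.mp hv
        exact ⟨hbd a ha, hn⟩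
      · rw [Finset.card_image_of_injective _ (fun a b h => (Prod.mk.injEq _ _ _ _).mp h |>.1),
          hcard]
      · intro p hp q hq hpq
        obtain ⟨a, ha, rfl⟩ := Finset.mem_image.mp hp
        obtain ⟨b, hb, rfl⟩ := Finset.mem_image.mp hq
        have hab : a ≠ b := fun h => hpq (by rw [h])
        rw [hP, if_pos hab]
        exact hcl a ha b hb hab
  · intro s hs
    unfold cliqueNum2 cliqueNum1
    congr 1
    ext k
    constructor
    · rintro ⟨S, hbd, hcard, hcl⟩
      -- first coordinates are constant on S
      have hfst : ∀ p ∈ S, ∀ q ∈ S, p.1 = q.1 := by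
        intro p hp q hq
        by_contra hne
        have hpq : p ≠ q := fun h => hne (by rw [h])
        have := hcl p hp q hq hpq
        rw [hP, if_pos hne] at this
        have hH : s ∈ CH := this ▸ hHmem _ _ (hbd p hp).1 (hbd q hq).1 hne
        exact (Finset.disjoint_right.mp hdisj hs) hH
      refine ⟨S.image Prod.snd, ?_, ?_, ?_⟩
      · intro v hv
        obtain ⟨p, hp, rfl⟩ := Finset.mem_image.mp hv
        exact (hbd p hp).2
      · rw [Finset.card_image_of_injOn, hcard]
        intro p hp q hq h2
        exact Prod.ext (hfst p hp q hq) h2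
      · intro a ha b hb hab
        obtain ⟨p, hp, rfl⟩ := Finset.mem_image.mp ha
        obtain ⟨q, hq, rfl⟩ := Finset.mem_image.mp hb
        have hpq : p ≠ q := fun h => hab (by rw [h])
        have := hcl p hp q hq hpq
        rw [hP, if_neg (by simpa using hfst p hp q hq)] at this
        exact this
    · rintro ⟨S, hbd, hcard, hcl⟩
      refine ⟨S.image (fun b => (0, b)), ?_, ?_, ?_⟩
      · intro v hv
        obtain ⟨b, hb, rfl⟩ := Finset.mem_image.mp hv
        exact ⟨hm, hbd b hb⟩
      · rw [Finset.card_image_of_injective _ (fun a b h => (Prod.mk.injEq _ _ _ _).mp h |>.2),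
          hcard]
      · intro p hp q hq hpq
        obtain ⟨a, ha, rfl⟩ := Finset.mem_image.mp hp
        obtain ⟨b, hb, rfl⟩ := Finset.mem_image.mp hq
        have hab : a ≠ b := fun h => hpq (by rw [h])
        rw [hP, if_neg (by simp)]
        exact hcl a ha b hb hab
end

section
/- In the lexicographic product coloring of K_{mn} built from colorings H of K_m and G of K_n with disjoint color sets, for any color t of H, the maximum size of a monochromatic clique in color t equals the maximum size of a monochromatic clique in color t in H; and for any color s of G, the maximum size of a monochromatic clique in color s equals that in G. Consequently R(k_1,...,k_p, l_1,...,l_q) > (R(k_1,...,k_p) - 1)·(R(l_1,...,l_q) - 1). -/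


def rset (C : Finset ℕ) (tgt : ℕ → ℕ) : Set ℕ :=
  {N | ∀ col : ℕ → ℕ → ℕ, (∀ i j, col i j = col j i) →
    (∀ i j, i < N → j < N → i ≠ j → col i j ∈ C) →
    ∃ s ∈ C, ∃ S : Finset ℕ, (∀ v ∈ S, v < N) ∧ S.card = tgt s ∧
      ∀ i ∈ S, ∀ j ∈ S, i ≠ j → col i j = s}

lemma rset_up {C : Finset ℕ} {tgt : ℕ → ℕ} {N N' : ℕ} (h : N ∈ rset C tgt) (hle : N ≤ N') :
    N' ∈ rset C tgt := by
  intro col hs hmem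
  obtain ⟨s, hsC, S, h1, h2, h3⟩ := h col hs
    (fun i j hi hj => hmem i j (hi.trans_le hle) (hj.trans_le hle))
  exact ⟨s, hsC, S, fun v hv => (h1 v hv).trans_le hle, h2, h3⟩

lemma zero_notMem_rset {C : Finset ℕ} {tgt : ℕ → ℕ} (h2 : ∀ s ∈ C, 2 ≤ tgt s) :
    0 ∉ rset C tgt := by
  intro h
  obtain ⟨s, hs, S, hb, hc, -⟩ := h (fun _ _ => 0) (fun _ _ => rfl) (by omega)
  have hS : S = ∅ := Finset.eq_empty_of_forall_notMem (fun v hv => absurd (hb v hv) (by omega))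
  have := h2 s hs
  rw [hS] at hc
  simp at hc
  omega

lemma ramsey_exists_s17 (C : Finset ℕ) (hC : C.Nonempty) (tgt : ℕ → ℕ) :
    (rset C tgt).Nonempty := by
  suffices h : ∀ k (tgt : ℕ → ℕ), (∑ s ∈ C, tgt s) = k → (rset C tgt).Nonempty from
    h _ tgt rfl
  intro k
  induction k using Nat.strong_induction_on with
  | _ k ih =>
    intro tgt hk
    by_cases hbase : ∃ s ∈ C, tgt s ≤ 1
    · obtain ⟨s, hsC, hs1⟩ := hbase
      refine ⟨1, fun col hsym hmem => ?_⟩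
      rcases Nat.le_one_iff_eq_zero_or_eq_one.mp hs1 with h | h
      · exact ⟨s, hsC, ∅, by simp, by simp [h], by simp⟩
      · refine ⟨s, hsC, {0}, by simp, by simp [h], ?_⟩
        intro i hi j hj hij
        simp only [Finset.mem_singleton] at hi hj
        omega
    · push_neg at hbase
      set Ni : ℕ → ℕ := fun i => sInf (rset C (Function.update tgt i (tgt i - 1))) with hNidef
      have hNimem : ∀ i ∈ C, Ni i ∈ rset C (Function.update tgt i (tgt i - 1)) := by
        intro i hiC
        apply Nat.sInf_mem
        have h1 : ∑ s ∈ C, Function.update tgt i (tgt i - 1) s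
            = tgt i - 1 + ∑ s ∈ C \ {i}, tgt s := Finset.sum_update_of_mem hiC tgt (tgt i - 1)
        have h2 : tgt i + ∑ s ∈ C \ {i}, tgt s = k := by
          rw [Finset.sdiff_singleton_eq_erase, Finset.add_sum_erase C tgt hiC]; exact hk
        have h3 := hbase i hiC
        exact ih (tgt i - 1 + ∑ s ∈ C \ {i}, tgt s) (by omega) _ h1
      refine ⟨2 + ∑ i ∈ C, Ni i, fun col hsym hmem => ?_⟩
      set N := 2 + ∑ i ∈ C, Ni i with hN
      have hcover : Finset.Ico 1 N ⊆
          C.biUnion (fun i => (Finset.Ico 1 N).filter (fun w => col 0 w = i)) := by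
        intro w hw
        have hw' := Finset.mem_Ico.mp hw
        have : col 0 w ∈ C := hmem 0 w (by omega) hw'.2 (by omega)
        exact Finset.mem_biUnion.mpr ⟨col 0 w, this, Finset.mem_filter.mpr ⟨hw, rfl⟩⟩
      have hsum : N - 1 ≤ ∑ i ∈ C, ((Finset.Ico 1 N).filter (fun w => col 0 w = i)).card := by
        calc N - 1 = (Finset.Ico 1 N).card := by rw [Nat.card_Ico]
        _ ≤ _ := (Finset.card_le_card hcover).trans Finset.card_biUnion_le
      have hex : ∃ i ∈ C, Ni i ≤ ((Finset.Ico 1 N).filter (fun w => col 0 w = i)).card := by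
        by_contra hcon
        push_neg at hcon
        have h3 : ∑ i ∈ C, ((Finset.Ico 1 N).filter (fun w => col 0 w = i)).card
            ≤ ∑ i ∈ C, Ni i := Finset.sum_le_sum (fun i hi => le_of_lt (hcon i hi))
        omega
      obtain ⟨i, hiC, hTi⟩ := hex
      set T := (Finset.Ico 1 N).filter (fun w => col 0 w = i) with hT
      obtain ⟨U, hUT, hUcard⟩ := Finset.exists_subset_card_eq hTi
      set f := U.orderEmbOfFin hUcard with hf
      set g : ℕ → ℕ := fun a => if h : a < Ni i then f ⟨a, h⟩ else 0 with hg
      have hgU : ∀ a, a < Ni i → g a ∈ U := by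
        intro a ha
        simp only [hg, dif_pos ha]
        exact Finset.orderEmbOfFin_mem U hUcard ⟨a, ha⟩
      have hgT : ∀ a, a < Ni i → g a ∈ T := fun a ha => hUT (hgU a ha)
      have hgIco : ∀ a, a < Ni i → 1 ≤ g a ∧ g a < N := by
        intro a ha
        have := (Finset.mem_filter.mp (hgT a ha)).1
        exact Finset.mem_Ico.mp this
      have hgcol : ∀ a, a < Ni i → col 0 (g a) = i := by
        intro a ha
        exact (Finset.mem_filter.mp (hgT a ha)).2
      have hginj : ∀ a, a < Ni i → ∀ b, b < Ni i → g a = g b → a = b := by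
        intro a ha b hb hab
        simp only [hg, dif_pos ha, dif_pos hb] at hab
        have := f.injective hab
        simpa using this
      set col' : ℕ → ℕ → ℕ := fun a b => col (g a) (g b) with hcol'
      obtain ⟨s, hsC, S', hS'1, hS'2, hS'3⟩ := hNimem i hiC col'
        (fun a b => hsym (g a) (g b))
        (by
          intro a b ha hb hab
          have h1 := hgIco a ha
          have h2 := hgIco b hb
          exact hmem (g a) (g b) h1.2 h2.2 (fun he => hab (hginj a ha b hb he)))
      set S := S'.image g with hS
      have hinj : Set.InjOn g ↑S' := fun a ha b hb hab =>
        hginj a (hS'1 a ha) b (hS'1 b hb) hab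
      have hcard : S.card = S'.card := Finset.card_image_of_injOn hinj
      have hedge : ∀ p ∈ S, ∀ q ∈ S, p ≠ q → col p q = s := by
        intro p hp q hq hpq
        obtain ⟨a, ha, rfl⟩ := Finset.mem_image.mp hp
        obtain ⟨b, hb, rfl⟩ := Finset.mem_image.mp hq
        exact hS'3 a ha b hb (fun he => hpq (he ▸ rfl))
      have hSbound : ∀ v ∈ S, 1 ≤ v ∧ v < N := by
        intro v hv
        obtain ⟨a, ha, rfl⟩ := Finset.mem_image.mp hv
        exact hgIco a (hS'1 a ha)
      rcases eq_or_ne s i with rfl | hsi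
      · -- color s = i : add vertex 0
        have h0S : 0 ∉ S := fun h => by have := (hSbound 0 h).1; omega
        refine ⟨s, hsC, insert 0 S, ?_, ?_, ?_⟩
        · intro v hv
          rcases Finset.mem_insert.mp hv with rfl | hv
          · omega
          · exact (hSbound v hv).2
        · rw [Finset.card_insert_of_notMem h0S, hcard, hS'2, Function.update_self]
          have := hbase s hsC
          omega
        · intro p hp q hq hpq
          rcases Finset.mem_insert.mp hp with rfl | hp <;>
            rcases Finset.mem_insert.mp hq with rfl | hq
          · omega
          · obtain ⟨a, ha, rfl⟩ := Finset.mem_image.mp hq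
            exact hgcol a (hS'1 a ha)
          · obtain ⟨a, ha, rfl⟩ := Finset.mem_image.mp hp
            rw [hsym]; exact hgcol a (hS'1 a ha)
          · exact hedge p hp q hq hpq
      · refine ⟨s, hsC, S, fun v hv => (hSbound v hv).2, ?_, hedge⟩
        rw [hcard, hS'2, Function.update_of_ne hsi]

lemma div_mod_eq {k v w : ℕ} (h1 : v / k = w / k) (h2 : v % k = w % k) : v = w := by
  conv_lhs => rw [← Nat.div_add_mod v k]
  rw [h1, h2, Nat.div_add_mod]

/-- In the lexicographic product colouring of `K_{mn}` built from `H` and `G`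
with disjoint colour sets, clique numbers in `H`-colours (resp. `G`-colours)
equal those of `H` (resp. `G`); consequently
`R(k₁,…,k_p,l₁,…,l_q) > (R(k₁,…,k_p) - 1)·(R(l₁,…,l_q) - 1)`. -/
theorem lex_product_ramsey (m n : ℕ) (hm : 1 ≤ m) (hn : 1 ≤ n)
    (colH colG : ℕ → ℕ → ℕ) (CH CG : Finset ℕ) (tgt : ℕ → ℕ)
    (hCH : CH.Nonempty) (hCG : CG.Nonempty)
    (htgt : ∀ s ∈ CH ∪ CG, 2 ≤ tgt s)
    (hHsym : ∀ a a', colH a a' = colH a' a)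
    (hGsym : ∀ b b', colG b b' = colG b' b)
    (hHmem : ∀ a a', a < m → a' < m → a ≠ a' → colH a a' ∈ CH)
    (hGmem : ∀ b b', b < n → b' < n → b ≠ b' → colG b b' ∈ CG)
    (hdisj : Disjoint CH CG)
    (colP : ℕ × ℕ → ℕ × ℕ → ℕ)
    (hP : ∀ p q : ℕ × ℕ,
      colP p q = if p.1 ≠ q.1 then colH p.1 q.1 else colG p.2 q.2) :
    (∀ t ∈ CH, cliqueNum2 m n colP t = cliqueNum1 m colH t) ∧
    (∀ s ∈ CG, cliqueNum2 m n colP s = cliqueNum1 n colG s) ∧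
    (mramsey CH tgt - 1) * (mramsey CG tgt - 1) < mramsey (CH ∪ CG) tgt := by
  have hdis : ∀ {x : ℕ}, x ∈ CH → x ∈ CG → False := fun hx hy =>
    Finset.disjoint_left.mp hdisj hx hy
  refine ⟨?_, ?_, ?_⟩
  · -- H-colours
    intro t htC
    unfold cliqueNum2 cliqueNum1
    congr 1
    ext k
    simp only [Set.mem_setOf_eq]
    constructor
    · rintro ⟨S, hb, hc, he⟩
      have hinj : Set.InjOn Prod.fst (↑S : Set (ℕ × ℕ)) := by
        intro p hp q hq hpq
        by_contra hne
        have h1 := he p hp q hq hne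
        rw [hP, if_neg (by simpa using hpq)] at h1
        have hp2 := hb p hp; have hq2 := hb q hq
        have hsnd : p.2 ≠ q.2 := fun h => hne (Prod.ext hpq h)
        exact hdis (h1 ▸ htC) (h1 ▸ hGmem p.2 q.2 hp2.2 hq2.2 hsnd)
      refine ⟨S.image Prod.fst, ?_, ?_, ?_⟩
      · intro a ha
        obtain ⟨p, hp, rfl⟩ := Finset.mem_image.mp ha
        exact (hb p hp).1
      · rw [Finset.card_image_of_injOn hinj, hc]
      · intro a ha a' ha' haa
        obtain ⟨p, hp, rfl⟩ := Finset.mem_image.mp ha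
        obtain ⟨q, hq, rfl⟩ := Finset.mem_image.mp ha'
        have hpq : p ≠ q := fun h => haa (by rw [h])
        have := he p hp q hq hpq
        rwa [hP, if_pos haa] at this
    · rintro ⟨S, hb, hc, he⟩
      refine ⟨S.image (fun a => (a, 0)), ?_, ?_, ?_⟩
      · intro v hv
        obtain ⟨a, ha, rfl⟩ := Finset.mem_image.mp hv
        exact ⟨hb a ha, hn⟩
      · rw [Finset.card_image_of_injective _ (fun a b h => (Prod.mk.injEq .. ▸ h).1), hc]
      · intro p hp q hq hpq
        obtain ⟨a, ha, rfl⟩ := Finset.mem_image.mp hp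
        obtain ⟨b, hb', rfl⟩ := Finset.mem_image.mp hq
        have hab : a ≠ b := fun h => hpq (by rw [h])
        rw [hP, if_pos (show (a, (0:ℕ)).1 ≠ (b, (0:ℕ)).1 from hab)]
        exact he a ha b hb' hab
  · -- G-colours
    intro s hsC
    unfold cliqueNum2 cliqueNum1
    congr 1
    ext k
    simp only [Set.mem_setOf_eq]
    constructor
    · rintro ⟨S, hb, hc, he⟩
      have hfst : ∀ p ∈ S, ∀ q ∈ S, p ≠ q → p.1 = q.1 := by
        intro p hp q hq hpq
        by_contra hne
        have h1 := he p hp q hq hpq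
        rw [hP, if_pos hne] at h1
        exact hdis (h1 ▸ hHmem p.1 q.1 (hb p hp).1 (hb q hq).1 hne) (h1 ▸ hsC)
      have hinj : Set.InjOn Prod.snd (↑S : Set (ℕ × ℕ)) := by
        intro p hp q hq hpq
        by_contra hne
        exact hne (Prod.ext (hfst p hp q hq hne) hpq)
      refine ⟨S.image Prod.snd, ?_, ?_, ?_⟩
      · intro b hb'
        obtain ⟨p, hp, rfl⟩ := Finset.mem_image.mp hb'
        exact (hb p hp).2
      · rw [Finset.card_image_of_injOn hinj, hc]
      · intro b hb' b' hb'' hbb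
        obtain ⟨p, hp, rfl⟩ := Finset.mem_image.mp hb'
        obtain ⟨q, hq, rfl⟩ := Finset.mem_image.mp hb''
        have hpq : p ≠ q := fun h => hbb (by rw [h])
        have h1 := he p hp q hq hpq
        rwa [hP, if_neg (by simpa using hfst p hp q hq hpq)] at h1
    · rintro ⟨S, hb, hc, he⟩
      refine ⟨S.image (fun b => (0, b)), ?_, ?_, ?_⟩
      · intro v hv
        obtain ⟨b, hb', rfl⟩ := Finset.mem_image.mp hv
        exact ⟨hm, hb b hb'⟩
      · rw [Finset.card_image_of_injective _ (fun a b h => (Prod.mk.injEq .. ▸ h).2), hc]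
      · intro p hp q hq hpq
        obtain ⟨a, ha, rfl⟩ := Finset.mem_image.mp hp
        obtain ⟨b, hb', rfl⟩ := Finset.mem_image.mp hq
        have hab : a ≠ b := fun h => hpq (by rw [h])
        rw [hP, if_neg (show ¬((0:ℕ), a).1 ≠ ((0:ℕ), b).1 by simp)]
        exact he a ha b hb' hab
  · -- Ramsey inequality
    have hch : ∀ s ∈ CH, 2 ≤ tgt s := fun s hs => htgt s (Finset.mem_union_left _ hs)
    have hcg : ∀ s ∈ CG, 2 ≤ tgt s := fun s hs => htgt s (Finset.mem_union_right _ hs)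
    have hMmem : mramsey CH tgt ∈ rset CH tgt := Nat.sInf_mem (ramsey_exists_s17 CH hCH tgt)
    have hNmem : mramsey CG tgt ∈ rset CG tgt := Nat.sInf_mem (ramsey_exists_s17 CG hCG tgt)
    have hU : (CH ∪ CG).Nonempty := hCH.mono Finset.subset_union_left
    have hUex := ramsey_exists_s17 (CH ∪ CG) hU tgt
    -- suffices product not in rset
    set m' := mramsey CH tgt - 1 with hm'
    set n' := mramsey CG tgt - 1 with hn'
    suffices hns : m' * n' ∉ rset (CH ∪ CG) tgt by
      by_contra hcon
      push_neg at hcon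
      exact hns (rset_up (Nat.sInf_mem hUex) hcon)
    have hM1 : 1 ≤ mramsey CH tgt := by
      rcases Nat.eq_zero_or_pos (mramsey CH tgt) with h | h
      · exact absurd (h ▸ hMmem) (zero_notMem_rset hch)
      · exact h
    have hN1 : 1 ≤ mramsey CG tgt := by
      rcases Nat.eq_zero_or_pos (mramsey CG tgt) with h | h
      · exact absurd (h ▸ hNmem) (zero_notMem_rset hcg)
      · exact h
    rcases Nat.eq_zero_or_pos n' with hz | hn'pos
    · rw [hz, Nat.mul_zero]
      exact zero_notMem_rset htgt
    rcases Nat.eq_zero_or_pos m' with hz | hm'pos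
    · rw [hz, Nat.zero_mul]
      exact zero_notMem_rset htgt
    -- extract bad colourings
    have hHbad : m' ∉ rset CH tgt :=
      Nat.notMem_of_lt_sInf (show m' < mramsey CH tgt by omega)
    have hGbad : n' ∉ rset CG tgt :=
      Nat.notMem_of_lt_sInf (show n' < mramsey CG tgt by omega)
    simp only [rset, Set.mem_setOf_eq] at hHbad hGbad
    push_neg at hHbad hGbad
    obtain ⟨cH, cHsym, cHmem, cHno⟩ := hHbad
    obtain ⟨cG, cGsym, cGmem, cGno⟩ := hGbad
    intro hmem'
    set col : ℕ → ℕ → ℕ := fun v w =>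
      if v / n' ≠ w / n' then cH (v / n') (w / n') else cG (v % n') (w % n') with hcol
    have hdiv : ∀ v, v < m' * n' → v / n' < m' := by
      intro v hv
      exact Nat.div_lt_of_lt_mul (Nat.mul_comm m' n' ▸ hv)
    obtain ⟨s, hsU, S, hSb, hSc, hSe⟩ := hmem' col
      (by
        intro v w
        simp only [hcol]
        rcases eq_or_ne (v / n') (w / n') with h | h
        · rw [if_neg (by omega), if_neg (by omega), cGsym]
        · rw [if_pos h, if_pos (Ne.symm h), cHsym])
      (by
        intro v w hv hw hvw
        simp only [hcol]
        rcases eq_or_ne (v / n') (w / n') with h | h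
        · rw [if_neg (by omega)]
          have hmod : v % n' ≠ w % n' := by
            intro he
            exact hvw (div_mod_eq h he)
          exact Finset.mem_union_right _
            (cGmem _ _ (Nat.mod_lt _ hn'pos) (Nat.mod_lt _ hn'pos) hmod)
        · rw [if_pos h]
          exact Finset.mem_union_left _ (cHmem _ _ (hdiv v hv) (hdiv w hw) h))
    rcases Finset.mem_union.mp hsU with hsH | hsG
    · -- mono clique in an H-colour yields one in cH
      have hfinj : Set.InjOn (· / n') ↑S := by
        intro v hv w hw hvw
        by_contra hne
        have h1 := hSe v hv w hw hne
        have hvw' : v / n' = w / n' := hvw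
        simp only [hcol] at h1
        rw [if_neg (show ¬ v / n' ≠ w / n' by omega)] at h1
        have hmod : v % n' ≠ w % n' := fun he => hne (div_mod_eq hvw' he)
        have h2 : cG (v % n') (w % n') ∈ CG :=
          cGmem _ _ (Nat.mod_lt _ hn'pos) (Nat.mod_lt _ hn'pos) hmod
        rw [h1] at h2
        exact hdis hsH h2
      obtain ⟨i, hi, j, hj, hij, hne⟩ := cHno s hsH (S.image (· / n'))
        (by
          intro a ha
          obtain ⟨v, hv, rfl⟩ := Finset.mem_image.mp ha
          exact hdiv v (hSb v hv))
        (by rw [Finset.card_image_of_injOn hfinj, hSc])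
      obtain ⟨v, hv, rfl⟩ := Finset.mem_image.mp hi
      obtain ⟨w, hw, rfl⟩ := Finset.mem_image.mp hj
      have hvw : v ≠ w := fun h => hij (by rw [h])
      have h1 := hSe v hv w hw hvw
      simp only [hcol] at h1
      rw [if_pos hij] at h1
      exact hne h1
    · -- mono clique in a G-colour yields one in cG
      have hfst : ∀ v ∈ S, ∀ w ∈ S, v ≠ w → v / n' = w / n' := by
        intro v hv w hw hvw
        by_contra hne
        have h1 := hSe v hv w hw hvw
        simp only [hcol] at h1
        rw [if_pos hne] at h1
        have h2 : cH (v / n') (w / n') ∈ CH :=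
          cHmem _ _ (hdiv v (hSb v hv)) (hdiv w (hSb w hw)) hne
        rw [h1] at h2
        exact hdis h2 hsG
      have hfinj : Set.InjOn (· % n') ↑S := by
        intro v hv w hw hvw
        by_contra hne
        have hq := hfst v hv w hw hne
        exact hne (div_mod_eq hq hvw)
      obtain ⟨i, hi, j, hj, hij, hne⟩ := cGno s hsG (S.image (· % n'))
        (by
          intro a ha
          obtain ⟨v, hv, rfl⟩ := Finset.mem_image.mp ha
          exact Nat.mod_lt _ hn'pos)
        (by rw [Finset.card_image_of_injOn hfinj, hSc])
      obtain ⟨v, hv, rfl⟩ := Finset.mem_image.mp hi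
      obtain ⟨w, hw, rfl⟩ := Finset.mem_image.mp hj
      have hvw : v ≠ w := fun h => hij (by rw [h])
      have h1 := hSe v hv w hw hvw
      have hd := hfst v hv w hw hvw
      simp only [hcol] at h1
      rw [if_neg (show ¬ v / n' ≠ w / n' by omega)] at h1
      exact hne h1
end

section
/- Let W be the compound coloring on lengths {1,...,(n-1)(m-1)} from the generalised construction with template L_q difference-free. Let l₁ = h₁ + (μ₁-1)(m-1) and l₂ = h₂ + (μ₂-1)(m-1) be two lengths with h₁, h₂ ∈ L_q, h₁ ≤ h₂, and μ₁ > μ₂. Then l₁ - l₂ = ((μ₁-μ₂)-1)(m-1) + ((m-1) - (h₂ - h₁)), and if l₁ - l₂ has a V-color t in W, then μ₁ - μ₂ has color t in V. -/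
/-- In the compound colouring `W`, for lengths `l₁ = h₁ + (μ₁-1)(m-1)` and
`l₂ = h₂ + (μ₂-1)(m-1)` with `h₁, h₂` in the template `L_q = {h : cU h = q}`,
`h₁ ≤ h₂` and `μ₂ < μ₁`:
`l₁ - l₂ = ((μ₁-μ₂)-1)(m-1) + ((m-1) - (h₂-h₁))`, and if `l₁ - l₂` receives a
`V`-colour `t` in `W`, then `μ₁ - μ₂` has colour `t` in `V`. -/
theorem compound_difference_wraparound (m n q r t h₁ h₂ μ₁ μ₂ : ℕ)
    (cU cV cW : ℕ → ℕ)
    (hm : 2 ≤ m)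
    (hUcol : ∀ h, 1 ≤ h → h ≤ m - 1 → 1 ≤ cU h ∧ cU h ≤ q)
    (htmpl : cU (m - 1) = q)
    (hdf : ∀ a b, 1 ≤ a → a < b → b ≤ m - 1 → cU a = q → cU b = q →
      cU (b - a) ≠ q)
    (hW : ∀ l, 1 ≤ l → l ≤ (n - 1) * (m - 1) →
      cW l = if cU ((l - 1) % (m - 1) + 1) = q then cV ((l - 1) / (m - 1) + 1)
             else cU ((l - 1) % (m - 1) + 1))
    (hh₁ : 1 ≤ h₁) (hh₂ : h₂ ≤ m - 1) (h12 : h₁ ≤ h₂)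
    (hq₁ : cU h₁ = q) (hq₂ : cU h₂ = q)
    (hμ : μ₂ < μ₁) (hμ₁ : μ₁ ≤ n - 1) (hμ₂ : 1 ≤ μ₂)
    (ht : q + 1 ≤ t) (ht' : t ≤ q + r) :
    (h₁ + (μ₁ - 1) * (m - 1)) - (h₂ + (μ₂ - 1) * (m - 1)) =
      ((μ₁ - μ₂) - 1) * (m - 1) + ((m - 1) - (h₂ - h₁)) ∧
    (cW ((h₁ + (μ₁ - 1) * (m - 1)) - (h₂ + (μ₂ - 1) * (m - 1))) = t →
      cV (μ₁ - μ₂) = t) := by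
  set M := m - 1 with hMdef
  have hM : 1 ≤ M := by omega
  set d := μ₁ - μ₂ with hddef
  have hd : 1 ≤ d := by omega
  set e := h₂ - h₁ with hedef
  have he : e < M := by omega
  -- rewrite the product (μ₁-1)*M
  have key : (μ₁ - 1) * M = (μ₂ - 1) * M + ((d - 1) * M + M) := by
    have h1 : μ₁ - 1 = (μ₂ - 1) + ((d - 1) + 1) := by omega
    rw [h1]; ring
  have hmain : (h₁ + (μ₁ - 1) * M) - (h₂ + (μ₂ - 1) * M) = (d - 1) * M + (M - e) := by
    rw [key]; omega
  refine ⟨hmain, ?_⟩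
  intro hct
  rw [hmain] at hct
  set l := (d - 1) * M + (M - e) with hldef
  have hl1 : 1 ≤ l := by omega
  have hlsub : l - 1 = (M - e - 1) + (d - 1) * M := by omega
  have hln : l ≤ (n - 1) * M := by
    have : l ≤ ((d - 1) + 1) * M := by
      have : ((d - 1) + 1) * M = (d - 1) * M + M := by ring
      omega
    calc l ≤ ((d - 1) + 1) * M := this
      _ ≤ (n - 1) * M := Nat.mul_le_mul_right M (by omega)
  have hmod : (l - 1) % M = M - e - 1 := by
    rw [hlsub, Nat.add_mul_mod_self_right, Nat.mod_eq_of_lt (by omega)]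
  have hdiv : (l - 1) / M = d - 1 := by
    rw [hlsub, Nat.add_mul_div_right _ _ (by omega : 0 < M),
      Nat.div_eq_of_lt (by omega)]
    omega
  rw [hW l hl1 hln, hmod, hdiv] at hct
  have hrep : M - e - 1 + 1 = M - e := by omega
  rw [hrep] at hct
  have hquo : d - 1 + 1 = d := by omega
  rw [hquo] at hct
  by_cases hc : cU (M - e) = q
  · rwa [if_pos hc] at hct
  · rw [if_neg hc] at hct
    have := hUcol (M - e) (by omega) (by omega)
    omega
end
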